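/- arXiv:2510.13309 — 3 statements merged into one kernel-verified Lean document; each statement's English description precedes it below -/
import Mathlib

section
/- Let Γ be a countable group acting non-singularly on a standard probability space (X, μ) with Radon–Nikodym cocycle ω(s, x) = (ds⁻¹μ/dμ)(x). If there exists a finite subset F ⊆ Γ with Σ_{s∈F} ∫_X √(ω(s,x)) dμ(x) > ‖Σ_{s∈F} λ_s‖, where λ is the left regular representation on ℓ²(Γ), then the action is non-amenable in the sense of Zimmer. -/
open Filter Topology MeasureTheory Set

/-- The operator norm `‖∑_{s ∈ F} λ_s‖` of the corresponding sum of left translation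
operators in the left regular representation on `ℓ²(Γ)`, described as the optimal
constant in the defining inequality over finitely supported vectors. -/
noncomputable def lamNorm (Γ : Type*) [Group Γ] (F : Finset Γ) : ℝ :=
  sInf {c : ℝ | 0 ≤ c ∧ ∀ f : Γ → ℝ, (Function.support f).Finite →
    ∑' x : Γ, (∑ s ∈ F, f (s⁻¹ * x)) ^ 2 ≤ c ^ 2 * ∑' x : Γ, (f x) ^ 2}

/-- Amenability in the sense of Zimmer of a non-singular action of a countable discrete
group, phrased via an asymptotically equivariant sequence of measurable maps
`X → Prob(Γ)`. -/
def ZimmerAmenable (Γ : Type*) {X : Type*} [Group Γ] [MulAction Γ X]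
    [MeasurableSpace X] (μ : Measure X) : Prop :=
  ∃ ξ : ℕ → X → Γ → ℝ,
    (∀ (n) (t : Γ), Measurable fun x => ξ n x t) ∧
    (∀ n x t, 0 ≤ ξ n x t) ∧
    (∀ n x, ∑' t : Γ, ξ n x t = 1) ∧
    ∀ s : Γ, Tendsto
      (fun n => ∫ x, ∑' t : Γ, |ξ n (s • x) t - ξ n x (s⁻¹ * t)| ∂μ)
      atTop (nhds 0)

open scoped ENNReal NNReal
set_option linter.unusedSectionVars false
set_option linter.unusedVariables false
set_option maxHeartbeats 1000000

lemma aux_sqrt_le {a b : ℝ} (ha : 0 ≤ a) (hb : 0 ≤ b) :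
    Real.sqrt a ≤ Real.sqrt b + Real.sqrt |b - a| := by
  rcases le_or_gt a b with h | h
  · have := Real.sqrt_le_sqrt h
    have h2 : (0:ℝ) ≤ Real.sqrt |b - a| := Real.sqrt_nonneg _
    linarith
  · have hab : |b - a| = a - b := by rw [abs_sub_comm]; exact abs_of_nonneg (by linarith)
    rw [hab]
    have key : a ≤ (Real.sqrt b + Real.sqrt (a - b)) ^ 2 := by
      rw [add_sq, Real.sq_sqrt hb, Real.sq_sqrt (by linarith)]
      nlinarith [Real.sqrt_nonneg b, Real.sqrt_nonneg (a - b), mul_nonneg (Real.sqrt_nonneg b) (Real.sqrt_nonneg (a-b))]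
    calc Real.sqrt a ≤ Real.sqrt ((Real.sqrt b + Real.sqrt (a - b)) ^ 2) := Real.sqrt_le_sqrt key
      _ = Real.sqrt b + Real.sqrt (a - b) := Real.sqrt_sq (by positivity)

lemma aux_hoelder {X : Type*} [MeasurableSpace X] (μ : Measure X) {f g : X → ℝ≥0∞}
    (hf : AEMeasurable f μ) (hg : AEMeasurable g μ) :
    ∫⁻ x, f x * g x ∂μ ≤ (∫⁻ x, f x ^ 2 ∂μ) ^ ((1:ℝ)/2) * (∫⁻ x, g x ^ 2 ∂μ) ^ ((1:ℝ)/2) := by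
  have hconj : (2:ℝ).HolderConjugate 2 := Real.holderConjugate_iff.mpr ⟨by norm_num, by norm_num⟩
  have h := ENNReal.lintegral_mul_le_Lp_mul_Lq μ hconj hf hg
  simp only [Pi.mul_apply] at h
  have h2 : ∀ y : ℝ≥0∞, y ^ (2:ℝ) = y ^ (2:ℕ) := by
    intro y; rw [show ((2:ℝ)) = ((2:ℕ):ℝ) by norm_num, ENNReal.rpow_natCast]
  simpa [h2] using h

lemma aux_tsum_CS' {ι : Type*} [Countable ι] (a b : ι → ℝ≥0∞) :
    ∑' i, a i * b i ≤ (∑' i, a i ^ 2) ^ ((1:ℝ)/2) * (∑' i, b i ^ 2) ^ ((1:ℝ)/2) := by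
  letI : MeasurableSpace ι := ⊤
  haveI : MeasurableSingletonClass ι := ⟨fun _ => trivial⟩
  have h := aux_hoelder (Measure.count : Measure ι)
    (f := a) (g := b) measurable_from_top.aemeasurable measurable_from_top.aemeasurable
  simpa [lintegral_count] using h

lemma aux_half_sq (v : ℝ≥0∞) : (v ^ ((1:ℝ)/2)) ^ 2 = v := by
  rw [← ENNReal.rpow_natCast _ 2, ← ENNReal.rpow_mul]
  norm_num

lemma aux_half_le (v : ℝ≥0∞) : v ^ ((1:ℝ)/2) ≤ 1 + v := by
  rcases le_total v 1 with h | h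
  · calc v ^ ((1:ℝ)/2) ≤ (1:ℝ≥0∞) ^ ((1:ℝ)/2) := ENNReal.rpow_le_rpow h (by norm_num)
      _ = 1 := ENNReal.one_rpow _
      _ ≤ 1 + v := le_self_add
  · calc v ^ ((1:ℝ)/2) ≤ v ^ (1:ℝ) := ENNReal.rpow_le_rpow_of_exponent_le h (by norm_num)
      _ = v := ENNReal.rpow_one v
      _ ≤ 1 + v := le_add_self

lemma aux_neghalf_sq {A : ℝ≥0∞} (h0 : A ≠ 0) (ht : A ≠ ⊤) :
    A ^ (-((1:ℝ)/2)) * A ^ (-((1:ℝ)/2)) * A = 1 := by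
  have h : A ^ ((-((1:ℝ)/2)) + (-((1:ℝ)/2)) + 1)
      = A ^ (-((1:ℝ)/2)) * A ^ (-((1:ℝ)/2)) * A := by
    rw [ENNReal.rpow_add _ _ h0 ht, ENNReal.rpow_add _ _ h0 ht, ENNReal.rpow_one]
  rw [← h]
  norm_num

lemma aux_neghalf_mul {A : ℝ≥0∞} (h0 : A ≠ 0) (ht : A ≠ ⊤) :
    A ^ (-((1:ℝ)/2)) * A = A ^ ((1:ℝ)/2) := by
  have h : A ^ ((-((1:ℝ)/2)) + 1) = A ^ (-((1:ℝ)/2)) * A := by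
    rw [ENNReal.rpow_add _ _ h0 ht, ENNReal.rpow_one]
  rw [← h]
  norm_num

lemma aux_neghalf_sq' (v : ℝ≥0∞) : (v ^ (-((1:ℝ)/2))) ^ 2 = v⁻¹ := by
  rw [← ENNReal.rpow_natCast _ 2, ← ENNReal.rpow_mul]
  norm_num [ENNReal.rpow_neg_one]

lemma aux_cK (C K : ℝ≥0∞) : (C ^ 2 * K) ^ ((1:ℝ)/2) * K ^ ((1:ℝ)/2) = C * K := by
  rw [ENNReal.mul_rpow_of_nonneg _ _ (by norm_num : (0:ℝ) ≤ 1/2),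
    ← ENNReal.rpow_natCast C 2, ← ENNReal.rpow_mul, mul_assoc,
    ← ENNReal.rpow_add_of_nonneg _ _ (by norm_num : (0:ℝ) ≤ 1/2) (by norm_num : (0:ℝ) ≤ 1/2)]
  norm_num

lemma aux_card {Γ : Type*} [Group Γ] (F : Finset Γ) (f : Γ → ℝ)
    (hf : (Function.support f).Finite) :
    ∑' x : Γ, (∑ s ∈ F, f (s⁻¹ * x)) ^ 2 ≤ (F.card : ℝ) ^ 2 * ∑' x : Γ, (f x) ^ 2 := by
  classical
  set E : Finset Γ := hf.toFinset with hE
  have hfE : ∀ y : Γ, y ∉ E → f y = 0 := by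
    intro y hy
    by_contra h
    exact hy (by simp [hE, Set.Finite.mem_toFinset, Function.mem_support, h])
  have hsumf : Summable (fun y : Γ => f y ^ 2) :=
    summable_of_ne_finset_zero (s := E) (fun y hy => by rw [hfE y hy]; ring)
  have htsumf : ∑' y : Γ, f y ^ 2 = ∑ y ∈ E, f y ^ 2 :=
    tsum_eq_sum (fun y hy => by rw [hfE y hy]; ring)
  set D : Finset Γ := F.biUnion (fun s => E.image (fun y => s * y)) with hD
  have hDzero : ∀ x : Γ, x ∉ D → (∑ s ∈ F, f (s⁻¹ * x)) = 0 := by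
    intro x hx
    refine Finset.sum_eq_zero fun s hs => ?_
    by_contra h
    have hmem : s⁻¹ * x ∈ E := by
      simp [hE, Set.Finite.mem_toFinset, Function.mem_support, h]
    exact hx (Finset.mem_biUnion.2 ⟨s, hs, Finset.mem_image.2 ⟨s⁻¹ * x, hmem, by group⟩⟩)
  have htsum : ∑' x : Γ, (∑ s ∈ F, f (s⁻¹ * x)) ^ 2 = ∑ x ∈ D, (∑ s ∈ F, f (s⁻¹ * x)) ^ 2 :=
    tsum_eq_sum (fun x hx => by rw [hDzero x hx]; ring)
  rw [htsum]
  have hpt : ∀ x : Γ, (∑ s ∈ F, f (s⁻¹ * x)) ^ 2 ≤ (F.card : ℝ) * ∑ s ∈ F, f (s⁻¹ * x) ^ 2 := by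
    intro x
    have := Finset.sum_mul_sq_le_sq_mul_sq F (fun s => f (s⁻¹ * x)) (fun _ => (1:ℝ))
    simp only [mul_one, one_pow, Finset.sum_const, nsmul_eq_mul] at this
    calc (∑ s ∈ F, f (s⁻¹ * x)) ^ 2 ≤ (∑ s ∈ F, f (s⁻¹ * x) ^ 2) * F.card := this
      _ = (F.card : ℝ) * ∑ s ∈ F, f (s⁻¹ * x) ^ 2 := by ring
  calc ∑ x ∈ D, (∑ s ∈ F, f (s⁻¹ * x)) ^ 2
      ≤ ∑ x ∈ D, (F.card : ℝ) * ∑ s ∈ F, f (s⁻¹ * x) ^ 2 :=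
        Finset.sum_le_sum (fun x _ => hpt x)
    _ = (F.card : ℝ) * ∑ s ∈ F, ∑ x ∈ D, f (s⁻¹ * x) ^ 2 := by
        rw [← Finset.mul_sum, Finset.sum_comm]
    _ ≤ (F.card : ℝ) * ∑ s ∈ F, ∑' y : Γ, f y ^ 2 := by
        refine mul_le_mul_of_nonneg_left (Finset.sum_le_sum fun s _ => ?_) (by positivity)
        have himg : ∑ x ∈ D, f (s⁻¹ * x) ^ 2 = ∑ y ∈ D.image (fun x => s⁻¹ * x), f y ^ 2 := by
          rw [Finset.sum_image (fun a _ b _ h => by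
            have := congrArg (fun z => s * z) h; simpa using this)]
        rw [himg]
        exact Summable.sum_le_tsum _ (fun y _ => sq_nonneg _) hsumf
    _ = (F.card : ℝ) ^ 2 * ∑' y : Γ, f y ^ 2 := by
        rw [Finset.sum_const, nsmul_eq_mul]; ring

lemma aux_ext {Γ : Type*} [Group Γ] (F : Finset Γ) {c : ℝ} (hc : 0 < c)
    (hineq : ∀ f : Γ → ℝ, (Function.support f).Finite →
      ∑' x : Γ, (∑ s ∈ F, f (s⁻¹ * x)) ^ 2 ≤ c ^ 2 * ∑' x : Γ, (f x) ^ 2)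
    (γ : Γ → ℝ≥0∞) :
    ∑' t : Γ, (∑ s ∈ F, γ (s⁻¹ * t)) ^ 2 ≤ (ENNReal.ofReal c) ^ 2 * ∑' t : Γ, (γ t) ^ 2 := by
  classical
  by_cases hR : ∑' t : Γ, (γ t) ^ 2 = ⊤
  · rw [hR, ENNReal.mul_top (pow_ne_zero _ (by simp [ENNReal.ofReal_eq_zero, hc.not_ge]))]
    exact le_top
  have hfin : ∀ t : Γ, γ t ≠ ⊤ := by
    intro t ht
    have h2 : (γ t) ^ 2 ≠ ⊤ := ne_top_of_le_ne_top hR (ENNReal.le_tsum t)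
    rw [ht] at h2
    simp at h2
  set g : Γ → ℝ := fun t => (γ t).toReal with hg
  have hγg : ∀ t, γ t = ENNReal.ofReal (g t) := fun t => (ENNReal.ofReal_toReal (hfin t)).symm
  have hg0 : ∀ t, 0 ≤ g t := fun t => ENNReal.toReal_nonneg
  rw [ENNReal.tsum_eq_iSup_sum]
  refine iSup_le fun T => ?_
  set E : Finset Γ := F.biUnion (fun s => T.image fun t => s⁻¹ * t) with hEdef
  set f : Γ → ℝ := fun x => if x ∈ E then g x else 0 with hfdef
  have hf0 : ∀ x, 0 ≤ f x := fun x => by by_cases h : x ∈ E <;> simp [hfdef, h, hg0]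
  have hfsupp : (Function.support f).Finite := by
    apply Set.Finite.subset E.finite_toSet
    intro x hx
    rw [Function.mem_support] at hx
    by_contra h
    exact hx (if_neg (fun hmem => h (Finset.mem_coe.2 hmem)))
  have key := hineq f hfsupp
  -- bound on ∑' f^2
  have hfsq : ∑' x : Γ, f x ^ 2 ≤ (∑' t : Γ, (γ t) ^ 2).toReal := by
    have h1 : ∑' x : Γ, f x ^ 2 = ∑ x ∈ E, f x ^ 2 :=
      tsum_eq_sum (fun x hx => by simp [hfdef, hx])
    have h2 : ∀ x ∈ E, f x ^ 2 = ((γ x) ^ 2).toReal := by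
      intro x hx
      simp only [hfdef, if_pos hx, hg, ENNReal.toReal_pow]
    rw [h1, Finset.sum_congr rfl h2, ← ENNReal.toReal_sum
      (fun x _ => ENNReal.pow_ne_top (hfin x))]
    exact ENNReal.toReal_mono hR (ENNReal.sum_le_tsum E)
  -- now the finite partial sum bound
  have hmemE : ∀ t ∈ T, ∀ s ∈ F, s⁻¹ * t ∈ E := by
    intro t ht s hs
    exact Finset.mem_biUnion.2 ⟨s, hs, Finset.mem_image.2 ⟨t, ht, rfl⟩⟩
  have hterm : ∀ t ∈ T, (∑ s ∈ F, γ (s⁻¹ * t)) ^ 2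
      = ENNReal.ofReal ((∑ s ∈ F, f (s⁻¹ * t)) ^ 2) := by
    intro t ht
    have : ∑ s ∈ F, γ (s⁻¹ * t) = ENNReal.ofReal (∑ s ∈ F, f (s⁻¹ * t)) := by
      rw [ENNReal.ofReal_sum_of_nonneg (fun s _ => hf0 _)]
      refine Finset.sum_congr rfl fun s hs => ?_
      rw [hγg, hfdef]
      simp [if_pos (hmemE t ht s hs)]
    rw [this, ← ENNReal.ofReal_pow (Finset.sum_nonneg fun s _ => hf0 _)]
  -- summability of the shifted sums
  have hshift : Summable (fun x : Γ => (∑ s ∈ F, f (s⁻¹ * x)) ^ 2) := by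
    refine summable_of_ne_finset_zero (s := F.biUnion fun s => E.image fun y => s * y)
      (fun x hx => ?_)
    have : ∀ s ∈ F, f (s⁻¹ * x) = 0 := by
      intro s hs
      by_cases h : s⁻¹ * x ∈ E
      · exfalso
        exact hx (Finset.mem_biUnion.2 ⟨s, hs, Finset.mem_image.2 ⟨s⁻¹ * x, h, by group⟩⟩)
      · simp [hfdef, h]
    rw [Finset.sum_congr rfl this]
    simp
  calc ∑ t ∈ T, (∑ s ∈ F, γ (s⁻¹ * t)) ^ 2
      = ENNReal.ofReal (∑ t ∈ T, (∑ s ∈ F, f (s⁻¹ * t)) ^ 2) := by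
        rw [Finset.sum_congr rfl hterm, ENNReal.ofReal_sum_of_nonneg
          (fun t _ => sq_nonneg _)]
    _ ≤ ENNReal.ofReal (∑' x : Γ, (∑ s ∈ F, f (s⁻¹ * x)) ^ 2) :=
        ENNReal.ofReal_le_ofReal (Summable.sum_le_tsum T (fun x _ => sq_nonneg _) hshift)
    _ ≤ ENNReal.ofReal (c ^ 2 * ∑' x : Γ, f x ^ 2) := ENNReal.ofReal_le_ofReal key
    _ ≤ ENNReal.ofReal (c ^ 2 * (∑' t : Γ, (γ t) ^ 2).toReal) :=
        ENNReal.ofReal_le_ofReal (mul_le_mul_of_nonneg_left hfsq (sq_nonneg c))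
    _ = (ENNReal.ofReal c) ^ 2 * ∑' t : Γ, (γ t) ^ 2 := by
        rw [ENNReal.ofReal_mul (sq_nonneg c), ENNReal.ofReal_pow hc.le,
          ENNReal.ofReal_toReal hR]

section AuxNSA

variable {Γ X : Type*} [Group Γ] [MeasurableSpace X] [MulAction Γ X] {μ : Measure X}
  {ω : Γ → X → ℝ}

lemma aux_preimage_eq_image (s : Γ) (A : Set X) :
    (fun x : X => s⁻¹ • x) ⁻¹' A = (fun x : X => s • x) '' A := by
  ext x
  simp only [Set.mem_preimage, Set.mem_image]
  constructor
  · intro h; exact ⟨s⁻¹ • x, h, smul_inv_smul s x⟩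
  · rintro ⟨a, ha, rfl⟩; rwa [inv_smul_smul]

lemma aux_cv (hmeas : ∀ s : Γ, Measurable fun x : X => s • x)
    (hωmeas : ∀ s, Measurable (ω s))
    (hrn : ∀ (s : Γ) (A : Set X), MeasurableSet A →
      ∫⁻ x in A, ENNReal.ofReal (ω s x) ∂μ = μ ((fun x => s • x) '' A))
    (s : Γ) {g : X → ℝ≥0∞} (hg : Measurable g) :
    ∫⁻ x, g (s⁻¹ • x) ∂μ = ∫⁻ x, g x * ENNReal.ofReal (ω s x) ∂μ := by
  have hmap : μ.map (fun x => s⁻¹ • x) = μ.withDensity (fun x => ENNReal.ofReal (ω s x)) := by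
    ext A hA
    rw [Measure.map_apply (hmeas s⁻¹) hA, withDensity_apply _ hA, hrn s A hA,
      aux_preimage_eq_image]
  rw [← lintegral_map hg (hmeas s⁻¹), hmap,
    lintegral_withDensity_eq_lintegral_mul _ ((hωmeas s).ennreal_ofReal) hg]
  congr 1; funext x; exact mul_comm _ _

lemma aux_etotal [IsProbabilityMeasure μ]
    (hrn : ∀ (s : Γ) (A : Set X), MeasurableSet A →
      ∫⁻ x in A, ENNReal.ofReal (ω s x) ∂μ = μ ((fun x => s • x) '' A))
    (s : Γ) :
    ∫⁻ x, ENNReal.ofReal (ω s x) ∂μ = 1 := by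
  have h := hrn s Set.univ MeasurableSet.univ
  rwa [setLIntegral_univ, Set.image_univ, (MulAction.bijective s).surjective.range_eq,
    measure_univ] at h

lemma aux_smul_image_measurable (hmeas : ∀ s : Γ, Measurable fun x : X => s • x)
    (s : Γ) {A : Set X} (hA : MeasurableSet A) :
    MeasurableSet ((fun x : X => s • x) '' A) := by
  rw [← aux_preimage_eq_image]
  exact (hmeas s⁻¹) hA

lemma aux_cocycle [IsProbabilityMeasure μ]
    (hmeas : ∀ s : Γ, Measurable fun x : X => s • x)
    (hωmeas : ∀ s, Measurable (ω s))
    (hrn : ∀ (s : Γ) (A : Set X), MeasurableSet A →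
      ∫⁻ x in A, ENNReal.ofReal (ω s x) ∂μ = μ ((fun x => s • x) '' A))
    (a b : Γ) :
    ∀ᵐ x ∂μ, ENNReal.ofReal (ω (a * b) x)
      = ENNReal.ofReal (ω a (b • x)) * ENNReal.ofReal (ω b x) := by
  apply ae_eq_of_forall_setLIntegral_eq_of_sigmaFinite
  · exact (hωmeas _).ennreal_ofReal
  · exact (((hωmeas a).comp (hmeas b)).ennreal_ofReal).mul ((hωmeas b).ennreal_ofReal)
  intro A hA _
  have h2 : ∀ x : X, A.indicator (fun z => ENNReal.ofReal (ω a (b • z))) (b⁻¹ • x)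
      = ((fun z : X => b • z) '' A).indicator (fun z => ENNReal.ofReal (ω a z)) x := by
    intro x
    rw [← aux_preimage_eq_image]
    by_cases hx : b⁻¹ • x ∈ A
    · rw [Set.indicator_of_mem hx, Set.indicator_of_mem (by exact hx), smul_inv_smul]
    · rw [Set.indicator_of_notMem hx, Set.indicator_of_notMem (by exact hx)]
  calc ∫⁻ x in A, ENNReal.ofReal (ω (a * b) x) ∂μ
      = μ ((fun x : X => (a * b) • x) '' A) := hrn (a * b) A hA
    _ = μ ((fun z : X => a • z) '' ((fun z : X => b • z) '' A)) := by
        rw [← Set.image_comp]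
        congr 1; funext x; simp [mul_smul]
    _ = ∫⁻ x in ((fun z : X => b • z) '' A), ENNReal.ofReal (ω a x) ∂μ :=
        (hrn a _ (aux_smul_image_measurable hmeas b hA)).symm
    _ = ∫⁻ x, ((fun z : X => b • z) '' A).indicator (fun z => ENNReal.ofReal (ω a z)) x ∂μ :=
        (lintegral_indicator (aux_smul_image_measurable hmeas b hA) _).symm
    _ = ∫⁻ x, A.indicator (fun z => ENNReal.ofReal (ω a (b • z))) (b⁻¹ • x) ∂μ :=
        lintegral_congr (fun x => (h2 x).symm)
    _ = ∫⁻ x, A.indicator (fun z => ENNReal.ofReal (ω a (b • z))) x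
          * ENNReal.ofReal (ω b x) ∂μ :=
        aux_cv hmeas hωmeas hrn b
          ((((hωmeas a).comp (hmeas b)).ennreal_ofReal).indicator hA)
    _ = ∫⁻ x in A, ENNReal.ofReal (ω a (b • x)) * ENNReal.ofReal (ω b x) ∂μ := by
        rw [← lintegral_indicator hA]
        congr 1; funext x
        by_cases hx : x ∈ A <;> simp [Set.indicator_apply, hx]

lemma aux_pullback
    (hrn : ∀ (s : Γ) (A : Set X), MeasurableSet A →
      ∫⁻ x in A, ENNReal.ofReal (ω s x) ∂μ = μ ((fun x => s • x) '' A))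
    (s : Γ) {P : X → Prop} (h : ∀ᵐ x ∂μ, P x) :
    ∀ᵐ x ∂μ, P (s⁻¹ • x) := by
  rw [ae_iff] at h ⊢
  obtain ⟨N, hN, hNm, hNnull⟩ := exists_measurable_superset_of_null h
  have hsub : {x : X | ¬ P (s⁻¹ • x)} ⊆ (fun x : X => s⁻¹ • x) ⁻¹' N := fun x hx => hN hx
  refine measure_mono_null hsub ?_
  rw [aux_preimage_eq_image, ← hrn s N hNm]
  exact setLIntegral_measure_zero _ _ hNnull

end AuxNSA

section Main

variable {Γ X : Type*} [Group Γ] [Countable Γ] [MeasurableSpace X]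
  [MulAction Γ X] {μ : Measure X} [IsProbabilityMeasure μ]
  {ω : Γ → X → ℝ} {ξ : ℕ → X → Γ → ℝ}

theorem aux_basics
    (hξ0 : ∀ n x t, 0 ≤ ξ n x t)
    (hξ1 : ∀ n x, ∑' t : Γ, ξ n x t = 1) :
    (∀ n (x : X), ∑' t : Γ, ENNReal.ofReal (ξ n x t) = 1)
    ∧ (∀ n (x : X) (s : Γ), ∑' t : Γ, ENNReal.ofReal (ξ n x (s⁻¹ * t)) = 1) := by
  have hsummable : ∀ n x, Summable (fun t => ξ n x t) := by
    intro n x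
    by_contra h
    have h0 := tsum_eq_zero_of_not_summable h
    rw [hξ1 n x] at h0
    norm_num at h0
  have hXi : ∀ n (x : X), ∑' t : Γ, ENNReal.ofReal (ξ n x t) = 1 := by
    intro n x
    rw [← ENNReal.ofReal_tsum_of_nonneg (hξ0 n x) (hsummable n x), hξ1, ENNReal.ofReal_one]
  refine ⟨hXi, fun n x s => ?_⟩
  calc ∑' t : Γ, ENNReal.ofReal (ξ n x (s⁻¹ * t))
      = ∑' t : Γ, ENNReal.ofReal (ξ n x t) := by
        simpa using (Equiv.mulLeft s⁻¹).tsum_eq (fun u => ENNReal.ofReal (ξ n x u))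
    _ = 1 := hXi n x

theorem aux_stepA_pt
    (hξ0 : ∀ n x t, 0 ≤ ξ n x t)
    (hξ1 : ∀ n x, ∑' t : Γ, ξ n x t = 1)
    (n : ℕ) (s : Γ) (x : X) :
    (1 : ℝ≥0∞) ≤ (∑' t : Γ, (ENNReal.ofReal (ξ n (s • x) t)) ^ ((1:ℝ)/2)
        * (ENNReal.ofReal (ξ n x (s⁻¹ * t))) ^ ((1:ℝ)/2))
      + (∑' t : Γ, ENNReal.ofReal |ξ n (s • x) t - ξ n x (s⁻¹ * t)|) ^ ((1:ℝ)/2) := by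
  obtain ⟨hXi, hXis⟩ := aux_basics (Γ := Γ) (X := X) (ξ := ξ) hξ0 hξ1
  set p : Γ → ℝ≥0∞ := fun t => (ENNReal.ofReal (ξ n x (s⁻¹ * t))) ^ ((1:ℝ)/2) with hp
  set q : Γ → ℝ≥0∞ := fun t => (ENNReal.ofReal (ξ n (s • x) t)) ^ ((1:ℝ)/2) with hq
  set r : Γ → ℝ≥0∞ := fun t =>
    (ENNReal.ofReal |ξ n (s • x) t - ξ n x (s⁻¹ * t)|) ^ ((1:ℝ)/2) with hr
  have hp2 : ∑' t, p t ^ 2 = 1 := by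
    calc ∑' t, p t ^ 2 = ∑' t, ENNReal.ofReal (ξ n x (s⁻¹ * t)) :=
          tsum_congr fun t => aux_half_sq _
      _ = 1 := hXis n x s
  have hr2 : ∀ t, r t ^ 2 = ENNReal.ofReal |ξ n (s • x) t - ξ n x (s⁻¹ * t)| :=
    fun t => aux_half_sq _
  have hpqr : ∀ t, p t ≤ q t + r t := by
    intro t
    rw [hp, hq, hr]
    simp only []
    rw [ENNReal.ofReal_rpow_of_nonneg (hξ0 n x _) (by norm_num),
      ENNReal.ofReal_rpow_of_nonneg (hξ0 n (s • x) _) (by norm_num),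
      ENNReal.ofReal_rpow_of_nonneg (abs_nonneg _) (by norm_num),
      ← ENNReal.ofReal_add (Real.rpow_nonneg (hξ0 n (s • x) _) _) (Real.rpow_nonneg (abs_nonneg _) _)]
    apply ENNReal.ofReal_le_ofReal
    rw [← Real.sqrt_eq_rpow, ← Real.sqrt_eq_rpow, ← Real.sqrt_eq_rpow]
    exact aux_sqrt_le (hξ0 n x _) (hξ0 n (s • x) _)
  calc (1 : ℝ≥0∞) = ∑' t, p t * p t := by
        rw [← hp2]; exact tsum_congr fun t => pow_two (p t)
    _ ≤ ∑' t, (q t + r t) * p t :=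
        ENNReal.tsum_le_tsum fun t => mul_le_mul_left (hpqr t) _
    _ = (∑' t, q t * p t) + ∑' t, r t * p t := by
        simp only [add_mul]; exact ENNReal.tsum_add
    _ ≤ (∑' t, q t * p t)
        + (∑' t, r t ^ 2) ^ ((1:ℝ)/2) * (∑' t, p t ^ 2) ^ ((1:ℝ)/2) :=
        add_le_add_right (aux_tsum_CS' r p) _
    _ = (∑' t, q t * p t)
        + (∑' t : Γ, ENNReal.ofReal |ξ n (s • x) t - ξ n x (s⁻¹ * t)|) ^ ((1:ℝ)/2) := by
        rw [hp2, ENNReal.one_rpow, mul_one]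
        congr 1
        exact congrArg (fun z => z ^ ((1:ℝ)/2)) (tsum_congr hr2)

lemma aux_Xi (hξ0 : ∀ n x t, 0 ≤ ξ n x t)
    (hξ1 : ∀ n (x : X), ∑' t : Γ, ξ n x t = 1)
    (n : ℕ) (x : X) : ∑' t : Γ, ENNReal.ofReal (ξ n x t) = 1 :=
  (aux_basics hξ0 hξ1).1 n x

theorem aux_stepA
    (hmeas : ∀ s : Γ, Measurable fun x : X => s • x)
    (hωmeas : ∀ s, Measurable (ω s))
    (hrn : ∀ (s : Γ) (A : Set X), MeasurableSet A →
      ∫⁻ x in A, ENNReal.ofReal (ω s x) ∂μ = μ ((fun x => s • x) '' A))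
    (hξm : ∀ (n) (t : Γ), Measurable fun x : X => ξ n x t)
    (hξ0 : ∀ n x t, 0 ≤ ξ n x t)
    (hξ1 : ∀ n x, ∑' t : Γ, ξ n x t = 1)
    (n : ℕ) (s : Γ) :
    ∫⁻ x, (ENNReal.ofReal (ω s x)) ^ ((1:ℝ)/2) ∂μ
      ≤ (∫⁻ x, (ENNReal.ofReal (ω s x)) ^ ((1:ℝ)/2)
          * ∑' t : Γ, (ENNReal.ofReal (ξ n (s • x) t)) ^ ((1:ℝ)/2)
              * (ENNReal.ofReal (ξ n x (s⁻¹ * t))) ^ ((1:ℝ)/2) ∂μ)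
        + (∫⁻ x, ∑' t : Γ, ENNReal.ofReal |ξ n (s • x) t - ξ n x (s⁻¹ * t)| ∂μ) ^ ((1:ℝ)/2) := by
  have hu : Measurable fun x : X => (ENNReal.ofReal (ω s x)) ^ ((1:ℝ)/2) :=
    ((hωmeas s).ennreal_ofReal).pow_const _
  have hqp : Measurable fun x : X => ∑' t : Γ,
      (ENNReal.ofReal (ξ n (s • x) t)) ^ ((1:ℝ)/2)
        * (ENNReal.ofReal (ξ n x (s⁻¹ * t))) ^ ((1:ℝ)/2) :=
    Measurable.ennreal_tsum fun t =>
      ((((hξm n t).comp (hmeas s)).ennreal_ofReal).pow_const _).mul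
        (((hξm n (s⁻¹ * t)).ennreal_ofReal).pow_const _)
  have hD : Measurable fun x : X =>
      ∑' t : Γ, ENNReal.ofReal |ξ n (s • x) t - ξ n x (s⁻¹ * t)| :=
    Measurable.ennreal_tsum fun t =>
      ((((hξm n t).comp (hmeas s)).sub (hξm n (s⁻¹ * t))).abs).ennreal_ofReal
  calc ∫⁻ x, (ENNReal.ofReal (ω s x)) ^ ((1:ℝ)/2) ∂μ
      = ∫⁻ x, (ENNReal.ofReal (ω s x)) ^ ((1:ℝ)/2) * 1 ∂μ := by simp
    _ ≤ ∫⁻ x, (ENNReal.ofReal (ω s x)) ^ ((1:ℝ)/2)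
          * ((∑' t : Γ, (ENNReal.ofReal (ξ n (s • x) t)) ^ ((1:ℝ)/2)
              * (ENNReal.ofReal (ξ n x (s⁻¹ * t))) ^ ((1:ℝ)/2))
            + (∑' t : Γ, ENNReal.ofReal |ξ n (s • x) t - ξ n x (s⁻¹ * t)|) ^ ((1:ℝ)/2)) ∂μ :=
        lintegral_mono fun x => mul_le_mul_right (aux_stepA_pt hξ0 hξ1 n s x) _
    _ = (∫⁻ x, (ENNReal.ofReal (ω s x)) ^ ((1:ℝ)/2)
          * ∑' t : Γ, (ENNReal.ofReal (ξ n (s • x) t)) ^ ((1:ℝ)/2)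
              * (ENNReal.ofReal (ξ n x (s⁻¹ * t))) ^ ((1:ℝ)/2) ∂μ)
        + ∫⁻ x, (ENNReal.ofReal (ω s x)) ^ ((1:ℝ)/2)
            * (∑' t : Γ, ENNReal.ofReal |ξ n (s • x) t - ξ n x (s⁻¹ * t)|) ^ ((1:ℝ)/2) ∂μ := by
        simp_rw [mul_add]
        exact lintegral_add_left (hu.mul hqp) _
    _ ≤ (∫⁻ x, (ENNReal.ofReal (ω s x)) ^ ((1:ℝ)/2)
          * ∑' t : Γ, (ENNReal.ofReal (ξ n (s • x) t)) ^ ((1:ℝ)/2)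
              * (ENNReal.ofReal (ξ n x (s⁻¹ * t))) ^ ((1:ℝ)/2) ∂μ)
        + (∫⁻ x, ∑' t : Γ, ENNReal.ofReal |ξ n (s • x) t - ξ n x (s⁻¹ * t)| ∂μ) ^ ((1:ℝ)/2) := by
        refine add_le_add_right ?_ _
        calc ∫⁻ x, (ENNReal.ofReal (ω s x)) ^ ((1:ℝ)/2)
              * (∑' t : Γ, ENNReal.ofReal |ξ n (s • x) t - ξ n x (s⁻¹ * t)|) ^ ((1:ℝ)/2) ∂μ
            ≤ (∫⁻ x, ((ENNReal.ofReal (ω s x)) ^ ((1:ℝ)/2)) ^ 2 ∂μ) ^ ((1:ℝ)/2)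
              * (∫⁻ x, ((∑' t : Γ, ENNReal.ofReal |ξ n (s • x) t - ξ n x (s⁻¹ * t)|) ^ ((1:ℝ)/2)) ^ 2 ∂μ) ^ ((1:ℝ)/2) :=
              aux_hoelder μ hu.aemeasurable ((hD.pow_const _).aemeasurable)
          _ = (∫⁻ x, ∑' t : Γ, ENNReal.ofReal |ξ n (s • x) t - ξ n x (s⁻¹ * t)| ∂μ) ^ ((1:ℝ)/2) := by
              simp_rw [aux_half_sq]
              rw [aux_etotal hrn s, ENNReal.one_rpow, one_mul]

theorem aux_stepB_term
    (hmeas : ∀ s : Γ, Measurable fun x : X => s • x)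
    (hωmeas : ∀ s, Measurable (ω s))
    (hωpos : ∀ s x, 0 < ω s x)
    (hrn : ∀ (s : Γ) (A : Set X), MeasurableSet A →
      ∫⁻ x in A, ENNReal.ofReal (ω s x) ∂μ = μ ((fun x => s • x) '' A))
    (hξm : ∀ (n) (t : Γ), Measurable fun x : X => ξ n x t)
    (n : ℕ) (s t : Γ) :
    ∫⁻ x, ((ENNReal.ofReal (ξ n ((s⁻¹*t) • x) (s⁻¹*t))) ^ ((1:ℝ)/2)
          * (ENNReal.ofReal (ω (s⁻¹*t)⁻¹ ((s⁻¹*t) • x))) ^ (-((1:ℝ)/2)))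
        * ((ENNReal.ofReal (ξ n (t • x) t)) ^ ((1:ℝ)/2)
          * (ENNReal.ofReal (ω t⁻¹ (t • x))) ^ (-((1:ℝ)/2))) ∂μ
      = ∫⁻ x, (ENNReal.ofReal (ω s x)) ^ ((1:ℝ)/2)
          * ((ENNReal.ofReal (ξ n (s • x) t)) ^ ((1:ℝ)/2)
            * (ENNReal.ofReal (ξ n x (s⁻¹ * t))) ^ ((1:ℝ)/2)) ∂μ := by
  have hEne : ∀ (u : Γ) (z : X), ENNReal.ofReal (ω u z) ≠ 0 :=
    fun u z => (ENNReal.ofReal_pos.2 (hωpos u z)).ne'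
  have hEnt : ∀ (u : Γ) (z : X), ENNReal.ofReal (ω u z) ≠ ⊤ :=
    fun u z => ENNReal.ofReal_ne_top
  set H : X → ℝ≥0∞ := fun z =>
    ((ENNReal.ofReal (ξ n (s⁻¹ • z) (s⁻¹*t))) ^ ((1:ℝ)/2)
      * (ENNReal.ofReal (ω (t⁻¹*s) (s⁻¹ • z))) ^ (-((1:ℝ)/2)))
    * ((ENNReal.ofReal (ξ n z t)) ^ ((1:ℝ)/2)
      * (ENNReal.ofReal (ω t⁻¹ z)) ^ (-((1:ℝ)/2))) with hHdef
  set K : X → ℝ≥0∞ := fun w =>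
    (ENNReal.ofReal (ξ n w (s⁻¹*t))) ^ ((1:ℝ)/2)
      * (ENNReal.ofReal (ξ n (s • w) t)) ^ ((1:ℝ)/2)
      * (ENNReal.ofReal (ω s w)) ^ (-((1:ℝ)/2)) with hKdef
  have hH : Measurable H := by
    apply Measurable.mul
    · exact ((((hξm n (s⁻¹*t)).comp (hmeas s⁻¹)).ennreal_ofReal).pow_const _).mul
        ((((hωmeas (t⁻¹*s)).comp (hmeas s⁻¹)).ennreal_ofReal).pow_const _)
    · exact (((hξm n t).ennreal_ofReal).pow_const _).mul
        (((hωmeas t⁻¹).ennreal_ofReal).pow_const _)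
  have hK : Measurable K := by
    apply Measurable.mul
    apply Measurable.mul
    · exact ((hξm n (s⁻¹*t)).ennreal_ofReal).pow_const _
    · exact (((hξm n t).comp (hmeas s)).ennreal_ofReal).pow_const _
    · exact ((hωmeas s).ennreal_ofReal).pow_const _
  have cv1 := aux_cv hmeas hωmeas hrn t⁻¹ hH
  rw [inv_inv] at cv1
  have cv2 := aux_cv hmeas hωmeas hrn s hK
  -- the cocycle identity, pulled back
  have hcc0 := aux_cocycle hmeas hωmeas hrn t⁻¹ s
  have hcc := aux_pullback hrn s hcc0
  calc ∫⁻ x, ((ENNReal.ofReal (ξ n ((s⁻¹*t) • x) (s⁻¹*t))) ^ ((1:ℝ)/2)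
          * (ENNReal.ofReal (ω (s⁻¹*t)⁻¹ ((s⁻¹*t) • x))) ^ (-((1:ℝ)/2)))
        * ((ENNReal.ofReal (ξ n (t • x) t)) ^ ((1:ℝ)/2)
          * (ENNReal.ofReal (ω t⁻¹ (t • x))) ^ (-((1:ℝ)/2))) ∂μ
      = ∫⁻ x, H (t • x) ∂μ := by
        refine lintegral_congr fun x => ?_
        rw [hHdef]
        simp only [mul_smul, mul_inv_rev, inv_inv, inv_smul_smul]
    _ = ∫⁻ x, H x * ENNReal.ofReal (ω t⁻¹ x) ∂μ := cv1
    _ = ∫⁻ x, K (s⁻¹ • x) ∂μ := by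
        refine lintegral_congr_ae ?_
        filter_upwards [hcc] with x hx
        rw [hHdef, hKdef]
        simp only [smul_inv_smul] at hx ⊢
        rw [hx, ENNReal.mul_rpow_of_ne_zero (hEne t⁻¹ x) (hEne s (s⁻¹ • x))]
        calc ((ENNReal.ofReal (ξ n (s⁻¹ • x) (s⁻¹*t))) ^ ((1:ℝ)/2)
              * ((ENNReal.ofReal (ω t⁻¹ x)) ^ (-((1:ℝ)/2))
                * (ENNReal.ofReal (ω s (s⁻¹ • x))) ^ (-((1:ℝ)/2))))
            * ((ENNReal.ofReal (ξ n x t)) ^ ((1:ℝ)/2)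
              * (ENNReal.ofReal (ω t⁻¹ x)) ^ (-((1:ℝ)/2)))
            * ENNReal.ofReal (ω t⁻¹ x)
            = (ENNReal.ofReal (ξ n (s⁻¹ • x) (s⁻¹*t))) ^ ((1:ℝ)/2)
              * (ENNReal.ofReal (ξ n x t)) ^ ((1:ℝ)/2)
              * (ENNReal.ofReal (ω s (s⁻¹ • x))) ^ (-((1:ℝ)/2))
              * ((ENNReal.ofReal (ω t⁻¹ x)) ^ (-((1:ℝ)/2))
                * (ENNReal.ofReal (ω t⁻¹ x)) ^ (-((1:ℝ)/2))
                * ENNReal.ofReal (ω t⁻¹ x)) := by ring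
          _ = (ENNReal.ofReal (ξ n (s⁻¹ • x) (s⁻¹*t))) ^ ((1:ℝ)/2)
              * (ENNReal.ofReal (ξ n x t)) ^ ((1:ℝ)/2)
              * (ENNReal.ofReal (ω s (s⁻¹ • x))) ^ (-((1:ℝ)/2)) := by
              rw [aux_neghalf_sq (hEne t⁻¹ x) (hEnt t⁻¹ x), mul_one]
    _ = ∫⁻ x, K x * ENNReal.ofReal (ω s x) ∂μ := cv2
    _ = ∫⁻ x, (ENNReal.ofReal (ω s x)) ^ ((1:ℝ)/2)
          * ((ENNReal.ofReal (ξ n (s • x) t)) ^ ((1:ℝ)/2)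
            * (ENNReal.ofReal (ξ n x (s⁻¹ * t))) ^ ((1:ℝ)/2)) ∂μ := by
        refine lintegral_congr fun x => ?_
        rw [hKdef]
        calc (ENNReal.ofReal (ξ n x (s⁻¹*t))) ^ ((1:ℝ)/2)
              * (ENNReal.ofReal (ξ n (s • x) t)) ^ ((1:ℝ)/2)
              * (ENNReal.ofReal (ω s x)) ^ (-((1:ℝ)/2))
              * ENNReal.ofReal (ω s x)
            = ((ENNReal.ofReal (ω s x)) ^ (-((1:ℝ)/2)) * ENNReal.ofReal (ω s x))
              * ((ENNReal.ofReal (ξ n (s • x) t)) ^ ((1:ℝ)/2)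
                * (ENNReal.ofReal (ξ n x (s⁻¹*t))) ^ ((1:ℝ)/2)) := by ring
          _ = (ENNReal.ofReal (ω s x)) ^ ((1:ℝ)/2)
              * ((ENNReal.ofReal (ξ n (s • x) t)) ^ ((1:ℝ)/2)
                * (ENNReal.ofReal (ξ n x (s⁻¹*t))) ^ ((1:ℝ)/2)) := by
              rw [aux_neghalf_mul (hEne s x) (hEnt s x)]

theorem aux_stepB
    (hmeas : ∀ s : Γ, Measurable fun x : X => s • x)
    (hωmeas : ∀ s, Measurable (ω s))
    (hωpos : ∀ s x, 0 < ω s x)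
    (hrn : ∀ (s : Γ) (A : Set X), MeasurableSet A →
      ∫⁻ x in A, ENNReal.ofReal (ω s x) ∂μ = μ ((fun x => s • x) '' A))
    (hξm : ∀ (n) (t : Γ), Measurable fun x : X => ξ n x t)
    (hξ0 : ∀ n x t, 0 ≤ ξ n x t)
    (hξ1 : ∀ n (x : X), ∑' t : Γ, ξ n x t = 1)
    (F : Finset Γ) {c : ℝ} (hc : 0 < c)
    (hineq : ∀ f : Γ → ℝ, (Function.support f).Finite →
      ∑' x : Γ, (∑ s ∈ F, f (s⁻¹ * x)) ^ 2 ≤ c ^ 2 * ∑' x : Γ, (f x) ^ 2)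
    (n : ℕ) :
    ∑ s ∈ F, ∫⁻ x, (ENNReal.ofReal (ω s x)) ^ ((1:ℝ)/2)
        * ∑' t : Γ, (ENNReal.ofReal (ξ n (s • x) t)) ^ ((1:ℝ)/2)
            * (ENNReal.ofReal (ξ n x (s⁻¹ * t))) ^ ((1:ℝ)/2) ∂μ
      ≤ ENNReal.ofReal c := by
  have hEne : ∀ (u : Γ) (z : X), ENNReal.ofReal (ω u z) ≠ 0 :=
    fun u z => (ENNReal.ofReal_pos.2 (hωpos u z)).ne'
  have hEnt : ∀ (u : Γ) (z : X), ENNReal.ofReal (ω u z) ≠ ⊤ :=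
    fun u z => ENNReal.ofReal_ne_top
  set G : X → Γ → ℝ≥0∞ := fun x t =>
    (ENNReal.ofReal (ξ n (t • x) t)) ^ ((1:ℝ)/2)
      * (ENNReal.ofReal (ω t⁻¹ (t • x))) ^ (-((1:ℝ)/2)) with hGdef
  have hGm : ∀ t : Γ, Measurable fun x => G x t := by
    intro t
    exact ((((hξm n t).comp (hmeas t)).ennreal_ofReal).pow_const _).mul
      ((((hωmeas t⁻¹).comp (hmeas t)).ennreal_ofReal).pow_const _)
  have hGm2 : ∀ s t : Γ, Measurable fun x => G x (s⁻¹ * t) * G x t :=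
    fun s t => (hGm _).mul (hGm t)
  have hGsum : ∀ s : Γ, Measurable fun x => ∑' t : Γ, G x (s⁻¹ * t) * G x t :=
    fun s => Measurable.ennreal_tsum fun t => hGm2 s t
  have hGsq : Measurable fun x => ∑' t : Γ, (G x t) ^ 2 :=
    Measurable.ennreal_tsum fun t => (hGm t).pow_const 2
  -- total mass of G²
  have hGsq_total : ∫⁻ x, ∑' t : Γ, (G x t) ^ 2 ∂μ = 1 := by
    have h1 : ∀ (x : X) (t : Γ), (G x t) ^ 2
        = ENNReal.ofReal (ξ n (t • x) t) * (ENNReal.ofReal (ω t⁻¹ (t • x)))⁻¹ := by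
      intro x t
      rw [hGdef]
      rw [mul_pow, aux_half_sq, aux_neghalf_sq']
    calc ∫⁻ x, ∑' t : Γ, (G x t) ^ 2 ∂μ
        = ∫⁻ x, ∑' t : Γ, ENNReal.ofReal (ξ n (t • x) t)
            * (ENNReal.ofReal (ω t⁻¹ (t • x)))⁻¹ ∂μ := by
          congr 1
          funext x
          exact tsum_congr fun t => h1 x t
      _ = ∑' t : Γ, ∫⁻ x, ENNReal.ofReal (ξ n (t • x) t)
            * (ENNReal.ofReal (ω t⁻¹ (t • x)))⁻¹ ∂μ :=
          lintegral_tsum fun t => ((((hξm n t).comp (hmeas t)).ennreal_ofReal).mul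
            (((hωmeas t⁻¹).comp (hmeas t)).ennreal_ofReal.inv)).aemeasurable
      _ = ∑' t : Γ, ∫⁻ x, ENNReal.ofReal (ξ n x t) ∂μ := by
          refine tsum_congr fun t => ?_
          have cv := aux_cv hmeas hωmeas hrn t⁻¹
            (g := fun w => ENNReal.ofReal (ξ n w t) * (ENNReal.ofReal (ω t⁻¹ w))⁻¹)
            (((hξm n t).ennreal_ofReal).mul ((hωmeas t⁻¹).ennreal_ofReal.inv))
          rw [inv_inv] at cv
          rw [cv]
          refine lintegral_congr fun w => ?_
          rw [mul_assoc, ENNReal.inv_mul_cancel (hEne t⁻¹ w) (hEnt t⁻¹ w), mul_one]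
      _ = ∫⁻ x, ∑' t : Γ, ENNReal.ofReal (ξ n x t) ∂μ :=
          (lintegral_tsum fun t => ((hξm n t).ennreal_ofReal).aemeasurable).symm
      _ = ∫⁻ _x : X, (1:ℝ≥0∞) ∂μ := lintegral_congr (μ := μ) fun x => aux_Xi hξ0 hξ1 n x
      _ = 1 := by simp
  -- rewrite each a-term
  have hstep : ∀ s : Γ,
      ∫⁻ x, (ENNReal.ofReal (ω s x)) ^ ((1:ℝ)/2)
        * ∑' t : Γ, (ENNReal.ofReal (ξ n (s • x) t)) ^ ((1:ℝ)/2)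
            * (ENNReal.ofReal (ξ n x (s⁻¹ * t))) ^ ((1:ℝ)/2) ∂μ
      = ∫⁻ x, ∑' t : Γ, G x (s⁻¹ * t) * G x t ∂μ := by
    intro s
    have hqp : ∀ t : Γ, Measurable fun x : X =>
        (ENNReal.ofReal (ω s x)) ^ ((1:ℝ)/2)
          * ((ENNReal.ofReal (ξ n (s • x) t)) ^ ((1:ℝ)/2)
            * (ENNReal.ofReal (ξ n x (s⁻¹ * t))) ^ ((1:ℝ)/2)) :=
      fun t => (((hωmeas s).ennreal_ofReal).pow_const _).mul
        (((((hξm n t).comp (hmeas s)).ennreal_ofReal).pow_const _).mul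
          (((hξm n (s⁻¹ * t)).ennreal_ofReal).pow_const _))
    calc ∫⁻ x, (ENNReal.ofReal (ω s x)) ^ ((1:ℝ)/2)
          * ∑' t : Γ, (ENNReal.ofReal (ξ n (s • x) t)) ^ ((1:ℝ)/2)
              * (ENNReal.ofReal (ξ n x (s⁻¹ * t))) ^ ((1:ℝ)/2) ∂μ
        = ∫⁻ x, ∑' t : Γ, (ENNReal.ofReal (ω s x)) ^ ((1:ℝ)/2)
            * ((ENNReal.ofReal (ξ n (s • x) t)) ^ ((1:ℝ)/2)
              * (ENNReal.ofReal (ξ n x (s⁻¹ * t))) ^ ((1:ℝ)/2)) ∂μ := by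
          refine lintegral_congr fun x => ?_
          exact (ENNReal.tsum_mul_left).symm
      _ = ∑' t : Γ, ∫⁻ x, (ENNReal.ofReal (ω s x)) ^ ((1:ℝ)/2)
            * ((ENNReal.ofReal (ξ n (s • x) t)) ^ ((1:ℝ)/2)
              * (ENNReal.ofReal (ξ n x (s⁻¹ * t))) ^ ((1:ℝ)/2)) ∂μ :=
          lintegral_tsum fun t => (hqp t).aemeasurable
      _ = ∑' t : Γ, ∫⁻ x, G x (s⁻¹ * t) * G x t ∂μ :=
          tsum_congr fun t =>
            (aux_stepB_term hmeas hωmeas hωpos hrn hξm n s t).symm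
      _ = ∫⁻ x, ∑' t : Γ, G x (s⁻¹ * t) * G x t ∂μ :=
          (lintegral_tsum fun t => (hGm2 s t).aemeasurable).symm
  -- pointwise Cauchy-Schwarz + the ℓ² bound
  have hpt : ∀ x : X, ∑' t : Γ, (∑ s ∈ F, G x (s⁻¹ * t)) * G x t
      ≤ ENNReal.ofReal c * ∑' t : Γ, (G x t) ^ 2 := by
    intro x
    calc ∑' t : Γ, (∑ s ∈ F, G x (s⁻¹ * t)) * G x t
        ≤ (∑' t : Γ, (∑ s ∈ F, G x (s⁻¹ * t)) ^ 2) ^ ((1:ℝ)/2)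
          * (∑' t : Γ, (G x t) ^ 2) ^ ((1:ℝ)/2) :=
          aux_tsum_CS' _ _
      _ ≤ ((ENNReal.ofReal c) ^ 2 * ∑' t : Γ, (G x t) ^ 2) ^ ((1:ℝ)/2)
          * (∑' t : Γ, (G x t) ^ 2) ^ ((1:ℝ)/2) := by
          refine mul_le_mul_left (ENNReal.rpow_le_rpow ?_ (by norm_num)) _
          exact aux_ext F hc hineq (fun t => G x t)
      _ = ENNReal.ofReal c * ∑' t : Γ, (G x t) ^ 2 := aux_cK _ _
  calc ∑ s ∈ F, ∫⁻ x, (ENNReal.ofReal (ω s x)) ^ ((1:ℝ)/2)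
        * ∑' t : Γ, (ENNReal.ofReal (ξ n (s • x) t)) ^ ((1:ℝ)/2)
            * (ENNReal.ofReal (ξ n x (s⁻¹ * t))) ^ ((1:ℝ)/2) ∂μ
      = ∑ s ∈ F, ∫⁻ x, ∑' t : Γ, G x (s⁻¹ * t) * G x t ∂μ :=
        Finset.sum_congr rfl fun s _ => hstep s
    _ = ∫⁻ x, ∑ s ∈ F, ∑' t : Γ, G x (s⁻¹ * t) * G x t ∂μ :=
        (lintegral_finset_sum' F fun s _ => (hGsum s).aemeasurable).symm
    _ = ∫⁻ x, ∑' t : Γ, (∑ s ∈ F, G x (s⁻¹ * t)) * G x t ∂μ := by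
        refine lintegral_congr fun x => ?_
        rw [← Summable.tsum_finsetSum fun s _ => ENNReal.summable]
        exact tsum_congr fun t => (Finset.sum_mul _ _ _).symm
    _ ≤ ∫⁻ x, ENNReal.ofReal c * ∑' t : Γ, (G x t) ^ 2 ∂μ :=
        lintegral_mono hpt
    _ = ENNReal.ofReal c * ∫⁻ x, ∑' t : Γ, (G x t) ^ 2 ∂μ :=
        lintegral_const_mul _ hGsq
    _ = ENNReal.ofReal c := by rw [hGsq_total, mul_one]

theorem aux_main
    (hmeas : ∀ s : Γ, Measurable fun x : X => s • x)
    (hωmeas : ∀ s, Measurable (ω s))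
    (hωpos : ∀ s x, 0 < ω s x)
    (hrn : ∀ (s : Γ) (A : Set X), MeasurableSet A →
      ∫⁻ x in A, ENNReal.ofReal (ω s x) ∂μ = μ ((fun x => s • x) '' A))
    (hξm : ∀ (n) (t : Γ), Measurable fun x : X => ξ n x t)
    (hξ0 : ∀ n x t, 0 ≤ ξ n x t)
    (hξ1 : ∀ n (x : X), ∑' t : Γ, ξ n x t = 1)
    (hξl : ∀ s : Γ, Tendsto
      (fun n => ∫ x, ∑' t : Γ, |ξ n (s • x) t - ξ n x (s⁻¹ * t)| ∂μ)
      atTop (nhds 0))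
    (F : Finset Γ) (hFne : F.Nonempty) {c : ℝ} (hc : 0 < c)
    (hineq : ∀ f : Γ → ℝ, (Function.support f).Finite →
      ∑' x : Γ, (∑ s ∈ F, f (s⁻¹ * x)) ^ 2 ≤ c ^ 2 * ∑' x : Γ, (f x) ^ 2) :
    ∑ s ∈ F, ∫ x, Real.sqrt (ω s x) ∂μ ≤ c := by
  obtain ⟨hXi, hXis⟩ := aux_basics hξ0 hξ1
  have hsummable : ∀ n (x : X), Summable (fun t : Γ => ξ n x t) := by
    intro n x
    by_contra h
    have h0 := tsum_eq_zero_of_not_summable h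
    rw [hξ1 n x] at h0
    norm_num at h0
  have hsummable' : ∀ n (x : X) (s : Γ), Summable (fun t : Γ => ξ n x (s⁻¹ * t)) :=
    fun n x s => (hsummable n x).comp_injective (Equiv.mulLeft s⁻¹).injective
  -- basic facts about W
  have hWfin : ∀ s : Γ, (∫⁻ x, (ENNReal.ofReal (ω s x)) ^ ((1:ℝ)/2) ∂μ) ≠ ⊤ := by
    intro s
    have hle : ∫⁻ x, (ENNReal.ofReal (ω s x)) ^ ((1:ℝ)/2) ∂μ
        ≤ ∫⁻ x, 1 + ENNReal.ofReal (ω s x) ∂μ :=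
      lintegral_mono fun x => aux_half_le _
    have heq : ∫⁻ x, 1 + ENNReal.ofReal (ω s x) ∂μ = 2 := by
      rw [lintegral_add_left measurable_const, lintegral_one, measure_univ,
        aux_etotal hrn s]
      norm_num
    exact ne_top_of_le_ne_top (by rw [heq]; exact ENNReal.ofNat_ne_top) hle
  have hWsqrt : ∀ s : Γ, ∫ x, Real.sqrt (ω s x) ∂μ
      = (∫⁻ x, (ENNReal.ofReal (ω s x)) ^ ((1:ℝ)/2) ∂μ).toReal := by
    intro s
    rw [integral_eq_lintegral_of_nonneg_ae (ae_of_all _ fun x => Real.sqrt_nonneg _)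
      ((hωmeas s).sqrt.aestronglyMeasurable)]
    congr 1
    refine lintegral_congr fun x => ?_
    rw [Real.sqrt_eq_rpow, ENNReal.ofReal_rpow_of_nonneg (hωpos s x).le (by norm_num)]
  -- facts about δ
  have hDmeas : ∀ n (s : Γ), Measurable fun x : X =>
      ∑' t : Γ, ENNReal.ofReal |ξ n (s • x) t - ξ n x (s⁻¹ * t)| :=
    fun n s => Measurable.ennreal_tsum fun t =>
      ((((hξm n t).comp (hmeas s)).sub (hξm n (s⁻¹ * t))).abs).ennreal_ofReal
  have habs : ∀ n (s : Γ) (x : X) (t : Γ),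
      |ξ n (s • x) t - ξ n x (s⁻¹ * t)| ≤ ξ n (s • x) t + ξ n x (s⁻¹ * t) := by
    intro n s x t
    calc |ξ n (s • x) t - ξ n x (s⁻¹ * t)| ≤ |ξ n (s • x) t| + |ξ n x (s⁻¹ * t)| :=
          abs_sub _ _
      _ = ξ n (s • x) t + ξ n x (s⁻¹ * t) := by
          rw [abs_of_nonneg (hξ0 _ _ _), abs_of_nonneg (hξ0 _ _ _)]
  have hDsum : ∀ n (s : Γ) (x : X),
      Summable fun t : Γ => |ξ n (s • x) t - ξ n x (s⁻¹ * t)| :=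
    fun n s x => Summable.of_nonneg_of_le (fun t => abs_nonneg _) (habs n s x)
      ((hsummable n (s • x)).add (hsummable' n x s))
  have hDreal : ∀ n (s : Γ) (x : X),
      ENNReal.ofReal (∑' t : Γ, |ξ n (s • x) t - ξ n x (s⁻¹ * t)|)
        = ∑' t : Γ, ENNReal.ofReal |ξ n (s • x) t - ξ n x (s⁻¹ * t)| :=
    fun n s x => ENNReal.ofReal_tsum_of_nonneg (fun t => abs_nonneg _) (hDsum n s x)
  have hDle : ∀ n (s : Γ) (x : X),
      (∑' t : Γ, ENNReal.ofReal |ξ n (s • x) t - ξ n x (s⁻¹ * t)|) ≤ 2 := by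
    intro n s x
    calc ∑' t : Γ, ENNReal.ofReal |ξ n (s • x) t - ξ n x (s⁻¹ * t)|
        ≤ ∑' t : Γ, (ENNReal.ofReal (ξ n (s • x) t) + ENNReal.ofReal (ξ n x (s⁻¹ * t))) := by
          refine ENNReal.tsum_le_tsum fun t => ?_
          rw [← ENNReal.ofReal_add (hξ0 _ _ _) (hξ0 _ _ _)]
          exact ENNReal.ofReal_le_ofReal (habs n s x t)
      _ = 1 + 1 := by rw [ENNReal.tsum_add, hXi n (s • x), hXis n x s]
      _ = 2 := by norm_num
  have hδfin : ∀ n (s : Γ),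
      (∫⁻ x, ∑' t : Γ, ENNReal.ofReal |ξ n (s • x) t - ξ n x (s⁻¹ * t)| ∂μ) ≠ ⊤ := by
    intro n s
    refine ne_top_of_le_ne_top (by norm_num : (2:ℝ≥0∞) ≠ ⊤) ?_
    calc ∫⁻ x, ∑' t : Γ, ENNReal.ofReal |ξ n (s • x) t - ξ n x (s⁻¹ * t)| ∂μ
        ≤ ∫⁻ _x : X, 2 ∂μ := lintegral_mono fun x => hDle n s x
      _ = 2 := by simp [measure_univ]
  have hint_eq : ∀ n (s : Γ), ∫ x, ∑' t : Γ, |ξ n (s • x) t - ξ n x (s⁻¹ * t)| ∂μ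
      = (∫⁻ x, ∑' t : Γ, ENNReal.ofReal |ξ n (s • x) t - ξ n x (s⁻¹ * t)| ∂μ).toReal := by
    intro n s
    have hms : AEStronglyMeasurable
        (fun x : X => ∑' t : Γ, |ξ n (s • x) t - ξ n x (s⁻¹ * t)|) μ := by
      have : (fun x : X => ∑' t : Γ, |ξ n (s • x) t - ξ n x (s⁻¹ * t)|)
          = fun x => (∑' t : Γ, ENNReal.ofReal |ξ n (s • x) t - ξ n x (s⁻¹ * t)|).toReal := by
        funext x
        rw [← hDreal n s x, ENNReal.toReal_ofReal (tsum_nonneg fun t => abs_nonneg _)]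
      rw [this]
      exact ((hDmeas n s).ennreal_toReal).aestronglyMeasurable
    rw [integral_eq_lintegral_of_nonneg_ae
      (ae_of_all _ fun x => tsum_nonneg fun t => abs_nonneg _) hms]
    congr 1
    exact lintegral_congr fun x => hDreal n s x
  have hδtend : ∀ s : Γ, Tendsto
      (fun n => ∫⁻ x, ∑' t : Γ, ENNReal.ofReal |ξ n (s • x) t - ξ n x (s⁻¹ * t)| ∂μ)
      atTop (nhds 0) := by
    intro s
    have h1 := hξl s
    simp_rw [hint_eq _ s] at h1
    have h2 := ENNReal.tendsto_ofReal h1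
    rw [ENNReal.ofReal_zero] at h2
    refine h2.congr fun n => ?_
    exact ENNReal.ofReal_toReal (hδfin n s)
  -- final assembly
  have hm1 : (1:ℝ) ≤ (F.card : ℝ) := by
    have := Finset.card_pos.2 hFne
    exact_mod_cast this
  have hmpos : (0:ℝ) < (F.card : ℝ) := lt_of_lt_of_le one_pos hm1
  refine le_of_forall_pos_le_add fun ε hε => ?_
  set ε' : ℝ := ε / (F.card : ℝ) with hε'def
  have hε' : 0 < ε' := div_pos hε hmpos
  have hev : ∀ s ∈ F, ∀ᶠ n in atTop,
      (∫⁻ x, ∑' t : Γ, ENNReal.ofReal |ξ n (s • x) t - ξ n x (s⁻¹ * t)| ∂μ)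
        < ENNReal.ofReal (ε' ^ 2) :=
    fun s _ => (hδtend s).eventually_lt_const (ENNReal.ofReal_pos.2 (by positivity))
  obtain ⟨N, hN⟩ := ((Filter.eventually_all_finset F).2 hev).exists
  -- the ENNReal chain
  have hchain : ENNReal.ofReal (∑ s ∈ F, ∫ x, Real.sqrt (ω s x) ∂μ)
      ≤ ENNReal.ofReal (c + ε) := by
    calc ENNReal.ofReal (∑ s ∈ F, ∫ x, Real.sqrt (ω s x) ∂μ)
        = ∑ s ∈ F, ∫⁻ x, (ENNReal.ofReal (ω s x)) ^ ((1:ℝ)/2) ∂μ := by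
          rw [ENNReal.ofReal_sum_of_nonneg
            (fun s _ => integral_nonneg fun x => Real.sqrt_nonneg _)]
          refine Finset.sum_congr rfl fun s _ => ?_
          rw [hWsqrt s, ENNReal.ofReal_toReal (hWfin s)]
      _ ≤ ∑ s ∈ F, ((∫⁻ x, (ENNReal.ofReal (ω s x)) ^ ((1:ℝ)/2)
            * ∑' t : Γ, (ENNReal.ofReal (ξ N (s • x) t)) ^ ((1:ℝ)/2)
                * (ENNReal.ofReal (ξ N x (s⁻¹ * t))) ^ ((1:ℝ)/2) ∂μ)
          + (∫⁻ x, ∑' t : Γ, ENNReal.ofReal |ξ N (s • x) t - ξ N x (s⁻¹ * t)| ∂μ) ^ ((1:ℝ)/2)) :=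
          Finset.sum_le_sum fun s _ => aux_stepA hmeas hωmeas hrn hξm hξ0 hξ1 N s
      _ = (∑ s ∈ F, ∫⁻ x, (ENNReal.ofReal (ω s x)) ^ ((1:ℝ)/2)
            * ∑' t : Γ, (ENNReal.ofReal (ξ N (s • x) t)) ^ ((1:ℝ)/2)
                * (ENNReal.ofReal (ξ N x (s⁻¹ * t))) ^ ((1:ℝ)/2) ∂μ)
          + ∑ s ∈ F, (∫⁻ x, ∑' t : Γ, ENNReal.ofReal |ξ N (s • x) t - ξ N x (s⁻¹ * t)| ∂μ) ^ ((1:ℝ)/2) :=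
          Finset.sum_add_distrib
      _ ≤ ENNReal.ofReal c + ∑ s ∈ F, ENNReal.ofReal ε' := by
          refine add_le_add (aux_stepB hmeas hωmeas hωpos hrn hξm hξ0 hξ1 F hc hineq N) ?_
          refine Finset.sum_le_sum fun s hs => ?_
          calc (∫⁻ x, ∑' t : Γ, ENNReal.ofReal |ξ N (s • x) t - ξ N x (s⁻¹ * t)| ∂μ) ^ ((1:ℝ)/2)
              ≤ (ENNReal.ofReal (ε' ^ 2)) ^ ((1:ℝ)/2) :=
                ENNReal.rpow_le_rpow (hN s hs).le (by norm_num)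
            _ = ENNReal.ofReal ε' := by
                rw [ENNReal.ofReal_rpow_of_nonneg (sq_nonneg _) (by norm_num)]
                congr 1
                rw [← Real.rpow_natCast ε' 2, ← Real.rpow_mul hε'.le]
                norm_num
      _ = ENNReal.ofReal (c + ε) := by
          rw [Finset.sum_const, nsmul_eq_mul, ← ENNReal.ofReal_natCast,
            ← ENNReal.ofReal_mul (by positivity), ← ENNReal.ofReal_add hc.le (by positivity)]
          congr 1
          rw [hε'def]
          field_simp
  exact (ENNReal.ofReal_le_ofReal_iff (by positivity)).1 hchain
end Main

/-- Douglas–Nowak, Vaes–Wahl. Let `Γ` be a countable group acting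
non-singularly on a standard probability space `(X, μ)` with Radon–Nikodym cocycle
`ω(s, x) = (d s⁻¹μ / dμ)(x)`.  If there is a finite `F ⊆ Γ` with
`∑_{s ∈ F} ∫ √(ω(s,x)) dμ(x) > ‖∑_{s ∈ F} λ_s‖`, then the action is non-amenable in
the sense of Zimmer. -/
theorem nonamenable_of_sqrt_cocycle_bound
    {Γ X : Type*} [Group Γ] [Countable Γ] [MeasurableSpace X] [StandardBorelSpace X]
    [MulAction Γ X] (μ : Measure X) [IsProbabilityMeasure μ]
    (hmeas : ∀ s : Γ, Measurable fun x : X => s • x)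
    (ω : Γ → X → ℝ)
    (hωmeas : ∀ s, Measurable (ω s))
    (hωpos : ∀ s x, 0 < ω s x)
    (hrn : ∀ (s : Γ) (A : Set X), MeasurableSet A →
      ∫⁻ x in A, ENNReal.ofReal (ω s x) ∂μ = μ ((fun x => s • x) '' A))
    (F : Finset Γ)
    (hF : lamNorm Γ F < ∑ s ∈ F, ∫ x, Real.sqrt (ω s x) ∂μ) :
    ¬ ZimmerAmenable Γ μ := by
  intro hAm
  obtain ⟨ξ, hξm, hξ0, hξ1, hξl⟩ := hAm
  have hSne : {c : ℝ | 0 ≤ c ∧ ∀ f : Γ → ℝ, (Function.support f).Finite →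
      ∑' x : Γ, (∑ s ∈ F, f (s⁻¹ * x)) ^ 2 ≤ c ^ 2 * ∑' x : Γ, (f x) ^ 2}.Nonempty :=
    ⟨(F.card : ℝ), ⟨Nat.cast_nonneg _, fun f hf => aux_card F f hf⟩⟩
  have hkey : ∀ c ∈ {c : ℝ | 0 ≤ c ∧ ∀ f : Γ → ℝ, (Function.support f).Finite →
      ∑' x : Γ, (∑ s ∈ F, f (s⁻¹ * x)) ^ 2 ≤ c ^ 2 * ∑' x : Γ, (f x) ^ 2},
      ∑ s ∈ F, ∫ x, Real.sqrt (ω s x) ∂μ ≤ c := by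
    rintro c ⟨hc0, hcineq⟩
    rcases F.eq_empty_or_nonempty with rfl | hFne
    · simpa using hc0
    rcases hc0.eq_or_lt with hc | hc
    · -- c = 0 is impossible when F is nonempty
      exfalso
      obtain ⟨s₀, hs₀⟩ := hFne
      classical
      set f : Γ → ℝ := fun x => if x = 1 then 1 else 0 with hf
      have hsupp : (Function.support f).Finite := by
        apply Set.Finite.subset (Set.finite_singleton 1)
        intro x hx
        rw [Function.mem_support] at hx
        by_contra h
        exact hx (if_neg (by simpa using h))
      have h := hcineq f hsupp
      rw [← hc] at h
      have hterm : ∀ x : Γ, x ∉ F → (∑ s ∈ F, f (s⁻¹ * x)) ^ 2 = 0 := by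
        intro x hx
        have : ∀ s ∈ F, f (s⁻¹ * x) = 0 := by
          intro s hs
          have hne : s⁻¹ * x ≠ 1 := by
            intro hone
            rw [inv_mul_eq_one] at hone
            exact hx (hone ▸ hs)
          rw [hf]
          exact if_neg hne
        rw [Finset.sum_congr rfl this]
        simp
      have hsummable2 : Summable (fun x : Γ => (∑ s ∈ F, f (s⁻¹ * x)) ^ 2) :=
        summable_of_ne_finset_zero (s := F) hterm
      have h1 : (∑ s ∈ F, f (s⁻¹ * s₀)) = 1 := by
        have : ∀ s ∈ F, f (s⁻¹ * s₀) = if s = s₀ then (1:ℝ) else 0 := by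
          intro s _
          simp [hf, inv_mul_eq_one, eq_comm]
        rw [Finset.sum_congr rfl this, Finset.sum_ite_eq' F s₀ (fun _ => (1:ℝ)), if_pos hs₀]
      have h2 : (1:ℝ) ≤ ∑' x : Γ, (∑ s ∈ F, f (s⁻¹ * x)) ^ 2 := by
        have := Summable.le_tsum hsummable2 s₀ (fun x _ => sq_nonneg _)
        rw [h1] at this
        simpa using this
      have h3 : (0:ℝ) ^ 2 * ∑' x : Γ, (f x) ^ 2 = 0 := by ring
      rw [h3] at h
      linarith
    · exact aux_main hmeas hωmeas hωpos hrn hξm hξ0 hξ1 hξl F hFne hc hcineq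
  have hle : ∑ s ∈ F, ∫ x, Real.sqrt (ω s x) ∂μ ≤ lamNorm Γ F := by
    rw [lamNorm]
    exact le_csInf hSne hkey
  linarith
end

section
/- Suppose Γ is a countable non-amenable group acting non-singularly on (X, μ), and there is a measurable subset Y ⊆ X with μ(Y) < 1/|F| · (|F| − ‖Σ_{s∈F}λ_s‖) for some finite F ⊆ Γ with ‖Σ_{s∈F}λ_s‖ < |F|, such that every s ∈ F acts trivially on X∖Y (so ω(s, x) = 1 for x ∈ X∖Y). Then Σ_{s∈F} ∫√(ω(s,x)) dμ > ‖Σ_{s∈F}λ_s‖, and hence the action is non-amenable in the sense of Zimmer. -/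
open Filter Topology MeasureTheory Set

lemma tsum_nonneg_toReal {ι : Type*} (f : ι → ℝ) (hf : ∀ i, 0 ≤ f i) :
    ∑' i, f i = (∑' i, ENNReal.ofReal (f i)).toReal := by
  by_cases h : (∑' i, ENNReal.ofReal (f i)) = ⊤
  · rw [h, ENNReal.toReal_top]
    apply tsum_eq_zero_of_not_summable
    intro hs
    rw [← ENNReal.ofReal_tsum_of_nonneg hf hs] at h
    exact ENNReal.ofReal_ne_top h
  · have hs : Summable f := by
      have := ENNReal.summable_toReal h
      exact this.congr fun i => ENNReal.toReal_ofReal (hf i)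
    rw [← ENNReal.ofReal_tsum_of_nonneg hf hs, ENNReal.toReal_ofReal (tsum_nonneg hf)]

lemma measurable_tsum_nonneg {X : Type*} [MeasurableSpace X] {ι : Type*} [Countable ι]
    (f : ι → X → ℝ) (hm : ∀ i, Measurable (f i)) (h0 : ∀ i x, 0 ≤ f i x) :
    Measurable fun x => ∑' i, f i x := by
  have : (fun x => ∑' i, f i x) = fun x => (∑' i, ENNReal.ofReal (f i x)).toReal := by
    funext x; exact tsum_nonneg_toReal _ (fun i => h0 i x)
  rw [this]
  exact (Measurable.ennreal_tsum fun i => (hm i).ennreal_ofReal).ennreal_toReal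

lemma lamNorm_spec {Γ : Type*} [Group Γ] (F : Finset Γ) :
    0 ≤ lamNorm Γ F ∧ ∀ f : Γ → ℝ, (Function.support f).Finite →
      ∑' x : Γ, (∑ s ∈ F, f (s⁻¹ * x)) ^ 2 ≤ (lamNorm Γ F) ^ 2 * ∑' x : Γ, (f x) ^ 2 := by
  set S := {c : ℝ | 0 ≤ c ∧ ∀ f : Γ → ℝ, (Function.support f).Finite →
    ∑' x : Γ, (∑ s ∈ F, f (s⁻¹ * x)) ^ 2 ≤ c ^ 2 * ∑' x : Γ, (f x) ^ 2} with hS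
  have hcl : IsClosed S := by
    have : S = {c : ℝ | 0 ≤ c} ∩ ⋂ (f : Γ → ℝ) (_ : (Function.support f).Finite),
        {c : ℝ | ∑' x : Γ, (∑ s ∈ F, f (s⁻¹ * x)) ^ 2 ≤ c ^ 2 * ∑' x : Γ, (f x) ^ 2} := by
      ext c
      simp only [hS, Set.mem_setOf_eq, Set.mem_inter_iff, Set.mem_iInter]
    rw [this]
    refine (isClosed_le continuous_const continuous_id).inter
      (isClosed_iInter fun f => isClosed_iInter fun _ => isClosed_le continuous_const ?_)
    exact (continuous_pow 2).mul continuous_const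
  have hmemN : ((F.card : ℝ)) ∈ S := by
    refine ⟨Nat.cast_nonneg _, fun f hf => ?_⟩
    classical
    set T : Finset Γ := F.biUnion (fun s => hf.toFinset.image (fun t => s * t)) with hT
    have hzero : ∀ x ∉ T, (∑ s ∈ F, f (s⁻¹ * x)) ^ 2 = 0 := by
      intro x hx
      have : ∀ s ∈ F, f (s⁻¹ * x) = 0 := by
        intro s hs
        by_contra hne
        apply hx
        refine Finset.mem_biUnion.2 ⟨s, hs, Finset.mem_image.2 ⟨s⁻¹ * x, ?_, by group⟩⟩
        simpa [Set.Finite.mem_toFinset] using hne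
      rw [Finset.sum_eq_zero this]; ring
    have hsumf : Summable (fun x : Γ => f x ^ 2) := by
      apply summable_of_ne_finset_zero (s := hf.toFinset)
      intro x hx
      have : f x = 0 := by
        by_contra hne; exact hx (by simpa [Set.Finite.mem_toFinset] using hne)
      rw [this]; ring
    rw [tsum_eq_sum hzero]
    calc ∑ x ∈ T, (∑ s ∈ F, f (s⁻¹ * x)) ^ 2
        ≤ ∑ x ∈ T, (F.card : ℝ) * ∑ s ∈ F, f (s⁻¹ * x) ^ 2 := by
          refine Finset.sum_le_sum fun x _ => ?_
          exact_mod_cast sq_sum_le_card_mul_sum_sq (s := F) (f := fun s => f (s⁻¹ * x))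
      _ = (F.card : ℝ) * ∑ s ∈ F, ∑ x ∈ T, f (s⁻¹ * x) ^ 2 := by
          rw [← Finset.mul_sum, Finset.sum_comm]
      _ ≤ (F.card : ℝ) * ∑ s ∈ F, ∑' x : Γ, f x ^ 2 := by
          refine mul_le_mul_of_nonneg_left (Finset.sum_le_sum fun s _ => ?_) (Nat.cast_nonneg _)
          have himg : ∑ x ∈ T, f (s⁻¹ * x) ^ 2 = ∑ y ∈ T.image (fun x => s⁻¹ * x), f y ^ 2 := by
            rw [Finset.sum_image (fun a _ b _ h => mul_left_cancel h)]
          rw [himg]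
          exact Summable.sum_le_tsum _ (fun x _ => sq_nonneg _) hsumf
      _ = (F.card : ℝ) ^ 2 * ∑' x : Γ, f x ^ 2 := by
          rw [Finset.sum_const, nsmul_eq_mul]; ring
  have hbdd : BddBelow S := ⟨0, fun c hc => hc.1⟩
  have := hcl.csInf_mem ⟨_, hmemN⟩ hbdd
  exact this

lemma lamNorm_tsum_bound {Γ : Type*} [Group Γ] (F : Finset Γ) (g : Γ → ℝ)
    (hg : ∀ t, 0 ≤ g t) (hsum : Summable fun t : Γ => g t ^ 2) :
    ∑' t : Γ, (∑ s ∈ F, g (s⁻¹ * t)) * g t ≤ lamNorm Γ F * ∑' t : Γ, g t ^ 2 := by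
  classical
  obtain ⟨hc0, hcineq⟩ := lamNorm_spec F
  set c := lamNorm Γ F
  set M := ∑' t : Γ, g t ^ 2 with hM
  have hM0 : 0 ≤ M := tsum_nonneg fun t => sq_nonneg _
  refine tsum_le_of_sum_le' (mul_nonneg hc0 hM0) fun E => ?_
  set D : Finset Γ := E ∪ F.biUnion (fun s => E.image (fun t => s⁻¹ * t)) with hD
  set gD : Γ → ℝ := fun t => if t ∈ D then g t else 0 with hgD
  have hgDfin : (Function.support gD).Finite := by
    apply Set.Finite.subset D.finite_toSet
    intro t ht
    simp only [hgD, Function.mem_support] at ht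
    by_contra h
    simp [h] at ht
    exact h (Finset.mem_coe.2 ht.1)
  have hgD0 : ∀ t, 0 ≤ gD t := fun t => by
    by_cases h : t ∈ D <;> simp [hgD, h, hg t]
  have hgDle : ∀ t, gD t ^ 2 ≤ g t ^ 2 := fun t => by
    by_cases h : t ∈ D <;> simp [hgD, h, sq_nonneg]
  have hsumgD : Summable (fun t : Γ => gD t ^ 2) :=
    hsum.of_nonneg_of_le (fun t => sq_nonneg _) hgDle
  have hMD : ∑' t : Γ, gD t ^ 2 ≤ M := Summable.tsum_le_tsum hgDle hsumgD hsum
  have key : ∀ t ∈ E, (∑ s ∈ F, g (s⁻¹ * t)) * g t = (∑ s ∈ F, gD (s⁻¹ * t)) * gD t := by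
    intro t ht
    have h1 : gD t = g t := by
      have : t ∈ D := Finset.mem_union_left _ ht
      simp [hgD, this]
    have h2 : ∀ s ∈ F, gD (s⁻¹ * t) = g (s⁻¹ * t) := by
      intro s hs
      have : s⁻¹ * t ∈ D := Finset.mem_union_right _
        (Finset.mem_biUnion.2 ⟨s, hs, Finset.mem_image.2 ⟨t, ht, rfl⟩⟩)
      simp [hgD, this]
    rw [h1, Finset.sum_congr rfl h2]
  rw [Finset.sum_congr rfl key]
  set A : Γ → ℝ := fun t => ∑ s ∈ F, gD (s⁻¹ * t) with hA
  have hA0 : ∀ t, 0 ≤ A t := fun t => Finset.sum_nonneg fun s _ => hgD0 _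
  have hAfin : Summable (fun t : Γ => A t ^ 2) := by
    apply summable_of_ne_finset_zero (s := F.biUnion (fun s => D.image (fun d => s * d)))
    intro t ht
    have : ∀ s ∈ F, gD (s⁻¹ * t) = 0 := by
      intro s hs
      by_cases hmem : s⁻¹ * t ∈ D
      · exact absurd (Finset.mem_biUnion.2 ⟨s, hs, Finset.mem_image.2 ⟨s⁻¹ * t, hmem, by group⟩⟩) ht
      · simp [hgD, hmem]
    rw [hA]; simp only
    rw [Finset.sum_eq_zero this]; ring
  set P := ∑ t ∈ E, A t * gD t with hP
  have hP0 : 0 ≤ P := Finset.sum_nonneg fun t _ => mul_nonneg (hA0 t) (hgD0 t)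
  have hCS : P ^ 2 ≤ (∑ t ∈ E, A t ^ 2) * (∑ t ∈ E, gD t ^ 2) :=
    Finset.sum_mul_sq_le_sq_mul_sq E A gD
  have h1 : ∑ t ∈ E, A t ^ 2 ≤ c ^ 2 * M := by
    calc ∑ t ∈ E, A t ^ 2 ≤ ∑' t : Γ, A t ^ 2 := Summable.sum_le_tsum E (fun t _ => sq_nonneg _) hAfin
      _ ≤ c ^ 2 * ∑' t : Γ, gD t ^ 2 := hcineq gD hgDfin
      _ ≤ c ^ 2 * M := by gcongr
  have h2 : ∑ t ∈ E, gD t ^ 2 ≤ M :=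
    le_trans (Summable.sum_le_tsum E (fun t _ => sq_nonneg _) hsumgD) hMD
  have hsq : P ^ 2 ≤ (c * M) ^ 2 := by
    have h2' : (0:ℝ) ≤ ∑ t ∈ E, A t ^ 2 := Finset.sum_nonneg fun t _ => sq_nonneg _
    have h3' : (0:ℝ) ≤ ∑ t ∈ E, gD t ^ 2 := Finset.sum_nonneg fun t _ => sq_nonneg _
    nlinarith [hCS, h1, h2]
  calc P ≤ |P| := le_abs_self P
    _ = Real.sqrt (P ^ 2) := (Real.sqrt_sq_eq_abs P).symm
    _ ≤ Real.sqrt ((c * M) ^ 2) := Real.sqrt_le_sqrt hsq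
    _ = c * M := by rw [Real.sqrt_sq (mul_nonneg hc0 hM0)]

lemma shift_summable {Γ : Type*} [Group Γ] (s : Γ) (ξ : Γ → ℝ) (hs : Summable ξ) :
    Summable (fun t : Γ => ξ (s⁻¹ * t)) := by
  have := (Equiv.mulLeft s⁻¹).summable_iff (f := ξ)
  exact this.2 hs

lemma shift_tsum {Γ : Type*} [Group Γ] (s : Γ) (ξ : Γ → ℝ) :
    ∑' t : Γ, ξ (s⁻¹ * t) = ∑' t : Γ, ξ t := by
  have := (Equiv.mulLeft s⁻¹).tsum_eq ξ
  simpa using this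

lemma abs_sub_summable {ι : Type*} (p q : ι → ℝ) (hp0 : ∀ i, 0 ≤ p i) (hq0 : ∀ i, 0 ≤ q i)
    (hp : Summable p) (hq : Summable q) :
    Summable (fun i => |p i - q i|) ∧ ∑' i, |p i - q i| ≤ ∑' i, p i + ∑' i, q i := by
  have hle : ∀ i, |p i - q i| ≤ p i + q i := by
    intro i
    rcases abs_cases (p i - q i) with ⟨h, -⟩ | ⟨h, -⟩ <;> rw [h] <;>
      [linarith [hq0 i]; linarith [hp0 i]]
  have hsum : Summable (fun i => |p i - q i|) :=
    (hp.add hq).of_nonneg_of_le (fun i => abs_nonneg _) hle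
  exact ⟨hsum, le_trans (Summable.tsum_le_tsum hle hsum (hp.add hq)) (le_of_eq (Summable.tsum_add hp hq))⟩

lemma sqrt_prob_facts {Γ : Type*} [Group Γ] (s : Γ) (ξ : Γ → ℝ)
    (h0 : ∀ t, 0 ≤ ξ t) (h1 : ∑' t : Γ, ξ t = 1) :
    Summable (fun t : Γ => Real.sqrt (ξ (s⁻¹ * t)) * Real.sqrt (ξ t)) ∧
    ∑' t : Γ, Real.sqrt (ξ (s⁻¹ * t)) * Real.sqrt (ξ t) ≤ 1 ∧
    1 - (1/2) * ∑' t : Γ, |ξ t - ξ (s⁻¹ * t)| ≤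
      ∑' t : Γ, Real.sqrt (ξ (s⁻¹ * t)) * Real.sqrt (ξ t) := by
  have hsξ : Summable ξ := by
    by_contra h
    rw [tsum_eq_zero_of_not_summable h] at h1
    norm_num at h1
  have hshift : Summable (fun t : Γ => ξ (s⁻¹ * t)) := shift_summable s ξ hsξ
  have hts : ∑' t : Γ, ξ (s⁻¹ * t) = 1 := by rw [shift_tsum s ξ, h1]
  set g : Γ → ℝ := fun t => Real.sqrt (ξ t) with hg
  have hg0 : ∀ t, 0 ≤ g t := fun t => Real.sqrt_nonneg _
  have hg2 : ∀ t, g t ^ 2 = ξ t := fun t => Real.sq_sqrt (h0 t)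
  have hb2 : ∀ t, g (s⁻¹ * t) * g t ≤ (1/2) * (ξ (s⁻¹ * t) + ξ t) := by
    intro t
    nlinarith [sq_nonneg (g (s⁻¹ * t) - g t), hg2 t, hg2 (s⁻¹ * t)]
  have hbsum : Summable (fun t => (1/2) * (ξ (s⁻¹ * t) + ξ t)) := (hshift.add hsξ).mul_left _
  have hsprod : Summable (fun t : Γ => g (s⁻¹ * t) * g t) :=
    hbsum.of_nonneg_of_le (fun t => mul_nonneg (hg0 _) (hg0 _)) hb2
  refine ⟨hsprod, ?_, ?_⟩
  · calc ∑' t : Γ, g (s⁻¹ * t) * g t ≤ ∑' t : Γ, (1/2) * (ξ (s⁻¹ * t) + ξ t) :=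
        Summable.tsum_le_tsum hb2 hsprod hbsum
      _ = (1/2) * (∑' t : Γ, ξ (s⁻¹ * t) + ∑' t : Γ, ξ t) := by
        rw [tsum_mul_left, Summable.tsum_add hshift hsξ]
      _ = 1 := by rw [hts, h1]; norm_num
  · have hd2 : ∀ t, (g (s⁻¹ * t) - g t) ^ 2 ≤ |ξ t - ξ (s⁻¹ * t)| := by
      intro t
      rcases abs_cases (ξ t - ξ (s⁻¹ * t)) with ⟨h, hc⟩ | ⟨h, hc⟩ <;> rw [h]
      · have hba : g (s⁻¹ * t) ≤ g t := Real.sqrt_le_sqrt (by linarith)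
        nlinarith [hg2 t, hg2 (s⁻¹ * t), mul_nonneg (hg0 (s⁻¹ * t)) (sub_nonneg.2 hba)]
      · have hba : g t ≤ g (s⁻¹ * t) := Real.sqrt_le_sqrt (by linarith)
        nlinarith [hg2 t, hg2 (s⁻¹ * t), mul_nonneg (hg0 t) (sub_nonneg.2 hba)]
    have habs : Summable (fun t : Γ => |ξ t - ξ (s⁻¹ * t)|) :=
      (abs_sub_summable ξ (fun t => ξ (s⁻¹ * t)) h0 (fun t => h0 _) hsξ hshift).1
    have hsd : Summable (fun t : Γ => (g (s⁻¹ * t) - g t) ^ 2) :=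
      habs.of_nonneg_of_le (fun t => sq_nonneg _) hd2
    have hid : ∀ t : Γ, g (s⁻¹ * t) * g t
        = (1/2) * (ξ (s⁻¹ * t) + ξ t - (g (s⁻¹ * t) - g t) ^ 2) := by
      intro t
      rw [← hg2 t, ← hg2 (s⁻¹ * t)]; ring
    have hteq : ∑' t : Γ, g (s⁻¹ * t) * g t
        = (1/2) * (2 - ∑' t : Γ, (g (s⁻¹ * t) - g t) ^ 2) := by
      rw [tsum_congr hid, tsum_mul_left, Summable.tsum_sub (hshift.add hsξ) hsd,
        Summable.tsum_add hshift hsξ, hts, h1]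
      norm_num
    have hdle : ∑' t : Γ, (g (s⁻¹ * t) - g t) ^ 2 ≤ ∑' t : Γ, |ξ t - ξ (s⁻¹ * t)| :=
      Summable.tsum_le_tsum hd2 hsd habs
    rw [hteq]
    linarith

/-- Suppose `Γ` is countable and acts non-singularly on `(X, μ)`,
`F ⊆ Γ` is finite with `‖∑_{s ∈ F} λ_s‖ < |F|`, and there is a measurable `Y ⊆ X` with
`μ(Y) < (|F| − ‖∑_{s ∈ F} λ_s‖)/|F|` such that every `s ∈ F` acts trivially on
`X ∖ Y` (so `ω(s, x) = 1` off `Y`).  Then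
`∑_{s ∈ F} ∫ √(ω(s,x)) dμ > ‖∑_{s ∈ F} λ_s‖`, and the action is non-amenable in the
sense of Zimmer. -/
theorem nonamenable_of_local_action
    {Γ X : Type*} [Group Γ] [Countable Γ] [MeasurableSpace X] [StandardBorelSpace X]
    [MulAction Γ X] (μ : Measure X) [IsProbabilityMeasure μ]
    (hmeas : ∀ s : Γ, Measurable fun x : X => s • x)
    (ω : Γ → X → ℝ)
    (hωmeas : ∀ s, Measurable (ω s))
    (hωpos : ∀ s x, 0 < ω s x)
    (hrn : ∀ (s : Γ) (A : Set X), MeasurableSet A →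
      ∫⁻ x in A, ENNReal.ofReal (ω s x) ∂μ = μ ((fun x => s • x) '' A))
    (F : Finset Γ) (hFne : F.Nonempty)
    (hnorm : lamNorm Γ F < (F.card : ℝ))
    (Y : Set X) (hY : MeasurableSet Y)
    (hYsmall : μ Y < ENNReal.ofReal (((F.card : ℝ) - lamNorm Γ F) / (F.card : ℝ)))
    (htriv : ∀ s ∈ F, ∀ x ∈ Yᶜ, s • x = x ∧ ω s x = 1) :
    lamNorm Γ F < ∑ s ∈ F, ∫ x, Real.sqrt (ω s x) ∂μ ∧ ¬ ZimmerAmenable Γ μ := by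
  classical
  obtain ⟨hc0, -⟩ := lamNorm_spec (Γ := Γ) F
  set c := lamNorm Γ F with hcdef
  set N : ℝ := (F.card : ℝ) with hNdef
  have hN0 : 0 < N := by
    rw [hNdef]
    exact_mod_cast Finset.card_pos.2 hFne
  have hYne : μ Y ≠ ⊤ := measure_ne_top μ Y
  have hYr : (μ Y).toReal < (N - c) / N := by
    have h2 : ((μ Y).toReal) < (ENNReal.ofReal ((N - c) / N)).toReal :=
      ENNReal.toReal_strict_mono ENNReal.ofReal_ne_top hYsmall
    rwa [ENNReal.toReal_ofReal (div_nonneg (sub_nonneg.2 hnorm.le) hN0.le)] at h2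
  have hgt : c < N * (1 - (μ Y).toReal) := by
    have h3 : N * ((N - c) / N) = N - c := by field_simp
    nlinarith [mul_lt_mul_of_pos_left hYr hN0]
  have hYc : (μ Yᶜ).toReal = 1 - (μ Y).toReal := by
    rw [measure_compl hY hYne, measure_univ,
      ENNReal.toReal_sub_of_le prob_le_one ENNReal.one_ne_top]
    simp
  constructor
  · -- part 1
    have hge : ∀ s ∈ F, 1 - (μ Y).toReal ≤ ∫ x, Real.sqrt (ω s x) ∂μ := by
      intro s hs
      have hωint : Integrable (ω s) μ := by
        refine ⟨(hωmeas s).aestronglyMeasurable, ?_⟩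
        have hfin : ∫⁻ x, ENNReal.ofReal (ω s x) ∂μ < ⊤ := by
          have h := hrn s Set.univ MeasurableSet.univ
          rw [Measure.restrict_univ] at h
          rw [h]
          exact measure_lt_top μ _
        rw [hasFiniteIntegral_iff_ofReal (ae_of_all _ fun x => (hωpos s x).le)]
        exact hfin
      have hsqm : Measurable fun x => Real.sqrt (ω s x) :=
        Real.continuous_sqrt.measurable.comp (hωmeas s)
      have hsqint : Integrable (fun x => Real.sqrt (ω s x)) μ := by
        refine Integrable.mono' ((hωint.add (integrable_const 1)).div_const 2)
          hsqm.aestronglyMeasurable (ae_of_all _ fun x => ?_)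
        rw [Real.norm_eq_abs, abs_of_nonneg (Real.sqrt_nonneg _)]
        simp only [Pi.add_apply]
        nlinarith [sq_nonneg (Real.sqrt (ω s x) - 1), Real.sq_sqrt (hωpos s x).le]
      have h1 : ∫ x in Yᶜ, Real.sqrt (ω s x) ∂μ ≤ ∫ x, Real.sqrt (ω s x) ∂μ :=
        setIntegral_le_integral hsqint (ae_of_all _ fun x => Real.sqrt_nonneg _)
      have h2 : ∫ x in Yᶜ, Real.sqrt (ω s x) ∂μ = (μ Yᶜ).toReal := by
        rw [setIntegral_congr_fun (g := fun _ => (1 : ℝ)) hY.compl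
          (fun x hx => by rw [(htriv s hs x hx).2, Real.sqrt_one])]
        simp [setIntegral_const, measureReal_def]
      rw [← hYc]
      linarith
    calc c < N * (1 - (μ Y).toReal) := hgt
      _ = ∑ _s ∈ F, (1 - (μ Y).toReal) := by rw [Finset.sum_const, nsmul_eq_mul]
      _ ≤ ∑ s ∈ F, ∫ x, Real.sqrt (ω s x) ∂μ := Finset.sum_le_sum hge
  · rintro ⟨ξ, hξm, hξ0, hξ1, hξinv⟩
    have hsummξ : ∀ n x, Summable (ξ n x) := by
      intro n x
      by_contra hcon
      have h1 := hξ1 n x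
      rw [tsum_eq_zero_of_not_summable hcon] at h1
      norm_num at h1
    set h : Γ → ℕ → X → ℝ :=
      fun s n x => ∑' t : Γ, Real.sqrt (ξ n x (s⁻¹ * t)) * Real.sqrt (ξ n x t) with hhdef
    set W : Γ → ℕ → X → ℝ :=
      fun s n x => ∑' t : Γ, |ξ n (s • x) t - ξ n x (s⁻¹ * t)| with hWdef
    have hhm : ∀ s n, Measurable (h s n) := by
      intro s n
      apply measurable_tsum_nonneg
        (f := fun t x => Real.sqrt (ξ n x (s⁻¹ * t)) * Real.sqrt (ξ n x t))
      · exact fun t => (Real.continuous_sqrt.measurable.comp (hξm n (s⁻¹ * t))).mul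
          (Real.continuous_sqrt.measurable.comp (hξm n t))
      · exact fun t x => mul_nonneg (Real.sqrt_nonneg _) (Real.sqrt_nonneg _)
    have hWm : ∀ s n, Measurable (W s n) := by
      intro s n
      apply measurable_tsum_nonneg (f := fun t x => |ξ n (s • x) t - ξ n x (s⁻¹ * t)|)
      · exact fun t => (((hξm n t).comp (hmeas s)).sub (hξm n (s⁻¹ * t))).abs
      · exact fun t x => abs_nonneg _
    have hh0 : ∀ s n x, 0 ≤ h s n x := fun s n x =>
      tsum_nonneg fun t => mul_nonneg (Real.sqrt_nonneg _) (Real.sqrt_nonneg _)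
    have hh1 : ∀ s n x, h s n x ≤ 1 := fun s n x =>
      (sqrt_prob_facts s (ξ n x) (hξ0 n x) (hξ1 n x)).2.1
    have hW0 : ∀ s n x, 0 ≤ W s n x := fun s n x => tsum_nonneg fun t => abs_nonneg _
    have hW2 : ∀ s n x, W s n x ≤ 2 := by
      intro s n x
      have hsp : Summable (ξ n (s • x)) := hsummξ n (s • x)
      have hsq : Summable (fun t : Γ => ξ n x (s⁻¹ * t)) :=
        shift_summable s (ξ n x) (hsummξ n x)
      have hsub := (abs_sub_summable (ξ n (s • x)) (fun t => ξ n x (s⁻¹ * t))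
        (hξ0 n (s • x)) (fun t => hξ0 n x _) hsp hsq).2
      rw [hξ1 n (s • x), shift_tsum s (ξ n x), hξ1 n x] at hsub
      show (∑' t : Γ, |ξ n (s • x) t - ξ n x (s⁻¹ * t)|) ≤ 2
      linarith
    have hint : ∀ (f : X → ℝ), Measurable f → ∀ C : ℝ, (∀ x, |f x| ≤ C) → Integrable f μ := by
      intro f hf C hC
      exact Integrable.mono' (integrable_const C) hf.aestronglyMeasurable
        (ae_of_all _ fun x => by simpa [Real.norm_eq_abs] using hC x)
    have hhint : ∀ s n, Integrable (h s n) μ := fun s n =>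
      hint _ (hhm s n) 1 fun x => by rw [abs_of_nonneg (hh0 s n x)]; exact hh1 s n x
    have hWint : ∀ s n, Integrable (W s n) μ := fun s n =>
      hint _ (hWm s n) 2 fun x => by rw [abs_of_nonneg (hW0 s n x)]; exact hW2 s n x
    have hYcle : (μ Yᶜ).toReal ≤ 1 := by
      rw [hYc]
      have : (0:ℝ) ≤ (μ Y).toReal := ENNReal.toReal_nonneg
      linarith
    have hup : ∀ n, ∑ s ∈ F, ∫ x in Yᶜ, h s n x ∂μ ≤ c := by
      intro n
      have hsum_h : ∀ x, ∑ s ∈ F, h s n x ≤ c := by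
        intro x
        set g : Γ → ℝ := fun t => Real.sqrt (ξ n x t) with hgdef
        have hg0 : ∀ t, 0 ≤ g t := fun t => Real.sqrt_nonneg _
        have hsg2 : Summable (fun t : Γ => g t ^ 2) :=
          (hsummξ n x).congr fun t => (Real.sq_sqrt (hξ0 n x t)).symm
        have hM1 : ∑' t : Γ, g t ^ 2 = 1 := by
          rw [tsum_congr (fun t => Real.sq_sqrt (hξ0 n x t))]
          exact hξ1 n x
        have key := lamNorm_tsum_bound F g hg0 hsg2
        rw [hM1, mul_one] at key
        have hswap : ∑ s ∈ F, h s n x = ∑' t : Γ, (∑ s ∈ F, g (s⁻¹ * t)) * g t := by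
          have h1 : ∀ t : Γ, (∑ s ∈ F, g (s⁻¹ * t)) * g t = ∑ s ∈ F, g (s⁻¹ * t) * g t :=
            fun t => Finset.sum_mul _ _ _
          rw [tsum_congr h1, Summable.tsum_finsetSum (fun s _ =>
            (sqrt_prob_facts s (ξ n x) (hξ0 n x) (hξ1 n x)).1)]
        rw [hswap]
        exact key
      calc ∑ s ∈ F, ∫ x in Yᶜ, h s n x ∂μ
          = ∫ x in Yᶜ, ∑ s ∈ F, h s n x ∂μ :=
            (integral_finset_sum F fun s _ => (hhint s n).integrableOn).symm
        _ ≤ ∫ _x in Yᶜ, c ∂μ :=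
            setIntegral_mono_on
              ((integrable_finset_sum F fun s _ => hhint s n).integrableOn)
              (integrableOn_const (measure_ne_top μ _)) hY.compl
              fun x _ => hsum_h x
        _ = (μ Yᶜ).toReal * c := by rw [setIntegral_const, smul_eq_mul, measureReal_def]
        _ ≤ 1 * c := mul_le_mul_of_nonneg_right hYcle hc0
        _ = c := one_mul c
    have hlow : ∀ s ∈ F, ∀ n,
        1 - (μ Y).toReal - (1/2) * ∫ x, W s n x ∂μ ≤ ∫ x in Yᶜ, h s n x ∂μ := by
      intro s hs n
      have hpt : ∀ x ∈ Yᶜ, 1 - (1/2) * W s n x ≤ h s n x := by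
        intro x hx
        have hax := (htriv s hs x hx).1
        have hWx : W s n x = ∑' t : Γ, |ξ n x t - ξ n x (s⁻¹ * t)| := by
          show (∑' t : Γ, |ξ n (s • x) t - ξ n x (s⁻¹ * t)|) = _
          rw [hax]
        rw [hWx]
        exact (sqrt_prob_facts s (ξ n x) (hξ0 n x) (hξ1 n x)).2.2
      have hi1 : Integrable (fun x => 1 - (1/2) * W s n x) μ :=
        (integrable_const 1).sub ((hWint s n).const_mul _)
      have h1 : ∫ x in Yᶜ, (1 - (1/2) * W s n x) ∂μ ≤ ∫ x in Yᶜ, h s n x ∂μ :=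
        setIntegral_mono_on hi1.integrableOn (hhint s n).integrableOn hY.compl hpt
      have h2 : ∫ x in Yᶜ, (1 - (1/2) * W s n x) ∂μ
          = (μ Yᶜ).toReal - (1/2) * ∫ x in Yᶜ, W s n x ∂μ := by
        rw [integral_sub (show IntegrableOn (fun _ => (1:ℝ)) Yᶜ μ from integrableOn_const (measure_ne_top μ _))
          ((hWint s n).integrableOn.const_mul _), setIntegral_const, smul_eq_mul, mul_one, measureReal_def,
          integral_const_mul]
      have h3 : ∫ x in Yᶜ, W s n x ∂μ ≤ ∫ x, W s n x ∂μ :=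
        setIntegral_le_integral (hWint s n) (ae_of_all _ fun x => hW0 s n x)
      rw [hYc] at h2
      linarith
    have hLn : ∀ n, N * (1 - (μ Y).toReal) - (1/2) * ∑ s ∈ F, ∫ x, W s n x ∂μ ≤ c := by
      intro n
      have hsum := Finset.sum_le_sum fun s hs => hlow s hs n
      have hexp : ∑ s ∈ F, (1 - (μ Y).toReal - (1/2) * ∫ x, W s n x ∂μ)
          = ∑ _s ∈ F, (1 - (μ Y).toReal) - (1/2) * ∑ s ∈ F, ∫ x, W s n x ∂μ := by
        rw [Finset.sum_sub_distrib, ← Finset.mul_sum]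
      have hcard : ∑ _s ∈ F, (1 - (μ Y).toReal) = N * (1 - (μ Y).toReal) := by
        rw [Finset.sum_const, nsmul_eq_mul, hNdef]
      rw [hexp, hcard] at hsum
      linarith [hup n, hsum]
    have htendW : Tendsto (fun n => ∑ s ∈ F, ∫ x, W s n x ∂μ) atTop (nhds 0) := by
      have ht := tendsto_finset_sum F (fun s (_ : s ∈ F) => hξinv s)
      simpa using ht
    have hfin : Tendsto
        (fun n => N * (1 - (μ Y).toReal) - (1/2) * ∑ s ∈ F, ∫ x, W s n x ∂μ)
        atTop (nhds (N * (1 - (μ Y).toReal))) := by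
      have h0 : Tendsto (fun _ : ℕ => N * (1 - (μ Y).toReal)) atTop
          (nhds (N * (1 - (μ Y).toReal))) := tendsto_const_nhds
      simpa using h0.sub (htendW.const_mul (1/2 : ℝ))
    obtain ⟨n, hn⟩ := (hfin.eventually (eventually_gt_nhds hgt)).exists
    exact absurd (hLn n) (not_le.2 hn)
end

section
/- For a non-amenable countable group Γ, there exists a finite subset F ⊆ Γ such that ‖Σ_{s∈F} λ_s‖ < |F|, where λ is the left regular representation on ℓ²(Γ). -/
section Aux
open Filter Topology Set

variable {Γ : Type*} [Group Γ] [DecidableEq Γ]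

/-- Sum of a shifted function over a large enough finset. -/
lemma sum_shift (f : Γ → ℝ) (K T : Finset Γ) (hK : ∀ x ∉ K, f x = 0) (s : Γ)
    (hT : ∀ x ∈ K, s * x ∈ T) : ∑ x ∈ T, f (s⁻¹ * x) ^ 2 = ∑ x ∈ K, f x ^ 2 := by
  have hinj : ∀ x ∈ T, ∀ y ∈ T, s⁻¹ * x = s⁻¹ * y → x = y := by
    intro x _ y _ hxy; simpa using mul_left_cancel hxy
  have h1 : ∑ y ∈ T.image (fun x => s⁻¹ * x), f y ^ 2 = ∑ x ∈ T, f (s⁻¹ * x) ^ 2 :=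
    Finset.sum_image hinj
  rw [← h1]
  apply (Finset.sum_subset ?_ ?_).symm
  · intro x hx
    exact Finset.mem_image.2 ⟨s * x, hT x hx, by group⟩
  · intro x _ hx
    rw [hK x hx]; ring

lemma key_est (F : Finset Γ) (hF1 : (1:Γ) ∈ F) (ε : ℝ) (hε : 0 < ε)
    (f : Γ → ℝ) (hf : (Function.support f).Finite)
    (hgt : ((F.card:ℝ) - ε)^2 * ∑' x, (f x) ^ 2 < ∑' x : Γ, (∑ s ∈ F, f (s⁻¹ * x)) ^ 2) :
    ∀ s ∈ F, ∑' x, (f (s⁻¹ * x) - f x) ^ 2 ≤ 4 * F.card * ε * ∑' x, (f x) ^ 2 := by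
  intro s hs
  set K := hf.toFinset with hKdef
  have hK : ∀ x ∉ K, f x = 0 := by
    intro x hx; by_contra hne; exact hx (hf.mem_toFinset.2 hne)
  set T := (F.biUnion fun t => K.image (fun x => t * x)) ∪ K with hTdef
  have hT2 : ∀ t ∈ F, ∀ x ∈ K, t * x ∈ T := by
    intro t ht x hx
    exact Finset.mem_union_left _ (Finset.mem_biUnion.2 ⟨t, ht, Finset.mem_image.2 ⟨x, hx, rfl⟩⟩)
  have hKT : K ⊆ T := Finset.subset_union_right
  have hTz : ∀ x ∉ T, f x = 0 := fun x hx => hK x (fun hxK => hx (hKT hxK))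
  have hTz2 : ∀ t ∈ F, ∀ x ∉ T, f (t⁻¹ * x) = 0 := by
    intro t ht x hx
    by_contra hne
    have h1 : t⁻¹ * x ∈ K := hf.mem_toFinset.2 hne
    have := hT2 t ht _ h1
    rw [mul_inv_cancel_left] at this
    exact hx this
  set S := ∑ x ∈ K, f x ^ 2 with hSdef
  have hS0 : 0 ≤ S := Finset.sum_nonneg fun x _ => sq_nonneg _
  have htsumS : ∑' x, (f x) ^ 2 = S :=
    tsum_eq_sum (fun x hx => by rw [hK x hx]; ring)
  have hsumTf : ∑ x ∈ T, f x ^ 2 = S :=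
    (Finset.sum_subset hKT (fun x _ hx => by rw [hK x hx]; ring)).symm
  have hshift : ∀ t ∈ F, ∑ x ∈ T, f (t⁻¹ * x) ^ 2 = S :=
    fun t ht => sum_shift f K T hK t (hT2 t ht)
  have hLHS : ∑' x : Γ, (∑ t ∈ F, f (t⁻¹ * x)) ^ 2 = ∑ x ∈ T, (∑ t ∈ F, f (t⁻¹ * x)) ^ 2 := by
    refine tsum_eq_sum fun x hx => ?_
    have : ∀ t ∈ F, f (t⁻¹ * x) = 0 := fun t ht => hTz2 t ht x hx
    rw [Finset.sum_congr rfl this]; simp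
  -- expansion into inner products
  have hexp : ∑ x ∈ T, (∑ t ∈ F, f (t⁻¹ * x)) ^ 2
      = ∑ p ∈ F ×ˢ F, ∑ x ∈ T, f (p.1⁻¹ * x) * f (p.2⁻¹ * x) := by
    rw [Finset.sum_comm]
    refine Finset.sum_congr rfl fun x _ => ?_
    rw [sq, Finset.sum_mul_sum]
    rw [Finset.sum_product]
  -- Cauchy-Schwarz
  have hCS : ∀ p ∈ F ×ˢ F, ∑ x ∈ T, f (p.1⁻¹ * x) * f (p.2⁻¹ * x) ≤ S := by
    rintro ⟨a, b⟩ hp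
    obtain ⟨ha, hb⟩ := Finset.mem_product.1 hp
    have h2 := Finset.sum_mul_sq_le_sq_mul_sq T (fun x => f (a⁻¹ * x)) (fun x => f (b⁻¹ * x))
    rw [hshift a ha, hshift b hb] at h2
    nlinarith [h2, hS0]
  have hp0 : ((s, (1:Γ))) ∈ F ×ˢ F := Finset.mem_product.2 ⟨hs, hF1⟩
  have hsplit : ∑ p ∈ F ×ˢ F, ∑ x ∈ T, f (p.1⁻¹ * x) * f (p.2⁻¹ * x)
      = (∑ x ∈ T, f (s⁻¹ * x) * f ((1:Γ)⁻¹ * x))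
        + ∑ p ∈ (F ×ˢ F).erase (s, 1), ∑ x ∈ T, f (p.1⁻¹ * x) * f (p.2⁻¹ * x) :=
    (Finset.add_sum_erase _ _ hp0).symm
  have hcard1 : 1 ≤ F.card * F.card := by
    have := Finset.card_pos.2 ⟨1, hF1⟩; nlinarith
  have herase : ∑ p ∈ (F ×ˢ F).erase (s, 1), ∑ x ∈ T, f (p.1⁻¹ * x) * f (p.2⁻¹ * x)
      ≤ ((F.card:ℝ)^2 - 1) * S := by
    have hb := Finset.sum_le_card_nsmul ((F ×ˢ F).erase (s, 1))
      (fun p => ∑ x ∈ T, f (p.1⁻¹ * x) * f (p.2⁻¹ * x)) S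
      (fun p hp => hCS p (Finset.mem_of_mem_erase hp))
    rw [Finset.card_erase_of_mem hp0, Finset.card_product] at hb
    rw [nsmul_eq_mul] at hb
    refine hb.trans ?_
    have : ((F.card * F.card - 1 : ℕ) : ℝ) = (F.card:ℝ)^2 - 1 := by
      rw [Nat.cast_sub hcard1]; push_cast; ring
    rw [this]
  set J := ∑ x ∈ T, f (s⁻¹ * x) * f ((1:Γ)⁻¹ * x) with hJdef
  have hJ' : J = ∑ x ∈ T, f (s⁻¹ * x) * f x := by
    refine Finset.sum_congr rfl fun x _ => by rw [inv_one, one_mul]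
  have hJlb : ((F.card:ℝ) - ε)^2 * S - ((F.card:ℝ)^2 - 1) * S < J := by
    have h3 : ((F.card:ℝ) - ε)^2 * S < J + ((F.card:ℝ)^2 - 1) * S := by
      rw [htsumS, hLHS, hexp, hsplit] at hgt
      linarith [hgt, herase]
    linarith
  -- final computation
  have hfin : ∑' x, (f (s⁻¹ * x) - f x) ^ 2 = ∑ x ∈ T, (f (s⁻¹ * x) - f x) ^ 2 := by
    refine tsum_eq_sum fun x hx => ?_
    rw [hTz x hx, hTz2 s hs x hx]; ring
  have hsplit2 : ∑ x ∈ T, (f (s⁻¹ * x) - f x) ^ 2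
      = (∑ x ∈ T, f (s⁻¹ * x) ^ 2) - 2 * (∑ x ∈ T, f (s⁻¹ * x) * f x) + ∑ x ∈ T, f x ^ 2 := by
    rw [Finset.mul_sum, ← Finset.sum_sub_distrib, ← Finset.sum_add_distrib]
    exact Finset.sum_congr rfl fun x _ => by ring
  rw [hfin, hsplit2, hshift s hs, hsumTf, htsumS]
  rw [hJ'] at hJlb
  have hc0 : (0:ℝ) ≤ F.card := Nat.cast_nonneg _
  nlinarith [mul_nonneg (mul_nonneg hε.le hε.le) hS0, hJlb, hS0]

lemma inv_est (s : Γ) (f : Γ → ℝ) (hf : (Function.support f).Finite) (A : Set Γ) :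
    ((∑' x, Set.indicator ((fun t => s * t) '' A) (fun y => f y ^ 2) x)
      - ∑' x, Set.indicator A (fun y => f y ^ 2) x) ^ 2
    ≤ 4 * (∑' x, (f (s * x) - f x) ^ 2) * (∑' x, (f x) ^ 2) := by
  set K := hf.toFinset with hKdef
  have hK : ∀ x ∉ K, f x = 0 := by
    intro x hx; by_contra hne; exact hx (hf.mem_toFinset.2 hne)
  set T := K ∪ K.image (fun x => s⁻¹ * x) with hTdef
  have hKT : K ⊆ T := Finset.subset_union_left
  have hz1 : ∀ x ∉ T, f x = 0 := fun x hx => hK x fun hxK => hx (hKT hxK)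
  have hz2 : ∀ x ∉ T, f (s * x) = 0 := by
    intro x hx
    by_contra hne
    have h1 : s * x ∈ K := hf.mem_toFinset.2 hne
    exact hx (Finset.mem_union_right _ (Finset.mem_image.2 ⟨s * x, h1, by group⟩))
  -- reindex the first tsum
  have hmem : ∀ x : Γ, s * x ∈ (fun t => s * t) '' A ↔ x ∈ A := fun x =>
    (mul_right_injective s).mem_set_image
  have hre : (∑' x, Set.indicator ((fun t => s * t) '' A) (fun y => f y ^ 2) x)
      = ∑' x, Set.indicator A (fun y => f (s * y) ^ 2) x := by
    rw [← Equiv.tsum_eq (Equiv.mulLeft s) (Set.indicator ((fun t => s * t) '' A) (fun y => f y ^ 2))]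
    refine tsum_congr fun x => ?_
    by_cases hx : x ∈ A <;>
      simp [Set.indicator_apply, hx, Equiv.coe_mulLeft, hmem x]
  -- summabilities
  have hsum1 : Summable (fun x => Set.indicator A (fun y => f (s * y) ^ 2) x) :=
    summable_of_ne_finset_zero (s := T) fun x hx => by
      by_cases hxA : x ∈ A <;> simp [Set.indicator_apply, hxA, hz2 x hx]
  have hsum2 : Summable (fun x => Set.indicator A (fun y => f y ^ 2) x) :=
    summable_of_ne_finset_zero (s := T) fun x hx => by
      by_cases hxA : x ∈ A <;> simp [Set.indicator_apply, hxA, hz1 x hx]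
  have hdiff : (∑' x, Set.indicator A (fun y => f (s * y) ^ 2) x)
      - ∑' x, Set.indicator A (fun y => f y ^ 2) x
      = ∑ x ∈ T, Set.indicator A (fun y => f (s * y) ^ 2 - f y ^ 2) x := by
    rw [← Summable.tsum_sub hsum1 hsum2]
    rw [tsum_eq_sum (s := T) (f := fun x => Set.indicator A (fun y => f (s*y)^2) x
        - Set.indicator A (fun y => f y ^2) x)
      (fun x hx => by
        by_cases hxA : x ∈ A <;> simp [Set.indicator_apply, hxA, hz1 x hx, hz2 x hx])]
    refine Finset.sum_congr rfl fun x _ => ?_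
    by_cases hxA : x ∈ A <;> simp [Set.indicator_apply, hxA]
  set u := fun x => f (s * x) - f x with hu
  set v := fun x => f (s * x) + f x with hv
  have e1 : |∑ x ∈ T, Set.indicator A (fun y => f (s * y) ^ 2 - f y ^ 2) x|
      ≤ ∑ x ∈ T, |u x| * |v x| := by
    refine (Finset.abs_sum_le_sum_abs _ _).trans (Finset.sum_le_sum fun x _ => ?_)
    by_cases hxA : x ∈ A
    · simp only [Set.indicator_of_mem hxA]
      rw [← abs_mul]
      have : f (s * x) ^ 2 - f x ^ 2 = u x * v x := by simp [hu, hv]; ring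
      rw [this]
    · simp only [Set.indicator_of_notMem hxA, abs_zero]
      positivity
  have e2 := Finset.sum_mul_sq_le_sq_mul_sq T (fun x => |u x|) (fun x => |v x|)
  simp only [sq_abs] at e2
  have hsumTf : ∑ x ∈ T, f x ^ 2 = ∑ x ∈ K, f x ^ 2 :=
    (Finset.sum_subset hKT (fun x _ hx => by rw [hK x hx]; ring)).symm
  have hshift : ∑ x ∈ T, f (s * x) ^ 2 = ∑ x ∈ K, f x ^ 2 := by
    have := sum_shift f K T hK s⁻¹ (fun x hx =>
      Finset.mem_union_right _ (Finset.mem_image.2 ⟨x, hx, rfl⟩))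
    simpa using this
  have e3 : ∑ x ∈ T, v x ^ 2 ≤ 4 * ∑ x ∈ K, f x ^ 2 := by
    have : ∀ x ∈ T, v x ^ 2 ≤ 2 * f (s * x) ^ 2 + 2 * f x ^ 2 := fun x _ => by
      simp only [hv]; nlinarith [sq_nonneg (f (s*x) - f x)]
    calc ∑ x ∈ T, v x ^ 2 ≤ ∑ x ∈ T, (2 * f (s * x) ^ 2 + 2 * f x ^ 2) :=
          Finset.sum_le_sum this
      _ = 2 * (∑ x ∈ T, f (s * x) ^ 2) + 2 * ∑ x ∈ T, f x ^ 2 := by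
          rw [Finset.sum_add_distrib, Finset.mul_sum, Finset.mul_sum]
      _ ≤ 4 * ∑ x ∈ K, f x ^ 2 := by rw [hshift, hsumTf]; ring_nf; linarith [le_refl (0:ℝ)]
  have e4 : ∑' x, (f (s * x) - f x) ^ 2 = ∑ x ∈ T, u x ^ 2 :=
    tsum_eq_sum fun x hx => by simp [hz1 x hx, hz2 x hx]
  have e5 : ∑' x, (f x) ^ 2 = ∑ x ∈ K, f x ^ 2 :=
    tsum_eq_sum fun x hx => by rw [hK x hx]; ring
  rw [hre, hdiff, e4, e5]
  have hu0 : 0 ≤ ∑ x ∈ T, u x ^ 2 := Finset.sum_nonneg fun x _ => sq_nonneg _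
  have habs : (∑ x ∈ T, Set.indicator A (fun y => f (s * y) ^ 2 - f y ^ 2) x) ^ 2
      ≤ (∑ x ∈ T, |u x| * |v x|) ^ 2 := by
    rw [← sq_abs]
    exact pow_le_pow_left₀ (abs_nonneg _) e1 2
  nlinarith [habs, e2, e3, hu0, Finset.sum_nonneg (fun x (_ : x ∈ T) => sq_nonneg (v x)),
    Finset.sum_nonneg (fun x (_ : x ∈ K) => sq_nonneg (f x))]

end Aux

open Filter Topology MeasureTheory Set

/-- A discrete group is amenable if it carries a left-invariant, finitely additive
probability "mean" on subsets. -/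
def HasInvariantMean (Γ : Type*) [Group Γ] : Prop :=
  ∃ m : Set Γ → ℝ,
    m Set.univ = 1 ∧ (∀ A, 0 ≤ m A) ∧
    (∀ A B, Disjoint A B → m (A ∪ B) = m A + m B) ∧
    (∀ (s : Γ) (A : Set Γ), m ((fun t => s * t) '' A) = m A)

set_option maxHeartbeats 1000000 in
/-- Kesten; see Brown–Ozawa, Theorem 2.6.8. For a non-amenable
countable group `Γ` there is a finite subset `F ⊆ Γ` with `‖∑_{s ∈ F} λ_s‖ < |F|`. -/
theorem exists_finset_lamNorm_lt_card
    (Γ : Type*) [Group Γ] [Countable Γ] (h : ¬ HasInvariantMean Γ) :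
    ∃ F : Finset Γ, F.Nonempty ∧ lamNorm Γ F < (F.card : ℝ) := by
  classical
  by_contra hcon
  push_neg at hcon
  apply h
  have : Nonempty Γ := ⟨1⟩
  obtain ⟨e, he⟩ := exists_surjective_nat Γ
  set F : ℕ → Finset Γ := fun n => insert 1 ((Finset.range (n+1)).image e) with hFdef
  have hF1 : ∀ n, (1:Γ) ∈ F n := fun n => Finset.mem_insert_self _ _
  have hFcard1 : ∀ n, 1 ≤ (F n).card := fun n => Finset.card_pos.2 ⟨1, hF1 n⟩
  have hFcard : ∀ n, ((F n).card : ℝ) ≤ (n:ℝ) + 2 := by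
    intro n
    have h1 : (F n).card ≤ ((Finset.range (n+1)).image e).card + 1 := Finset.card_insert_le _ _
    have h2 : ((Finset.range (n+1)).image e).card ≤ n + 1 :=
      (Finset.card_image_le).trans (by simp)
    have : (F n).card ≤ n + 2 := by omega
    exact_mod_cast this
  set ε : ℕ → ℝ := fun n => 1 / ((n:ℝ) + 2)^2 with hεdef
  have hε0 : ∀ n, 0 < ε n := fun n => by positivity
  have hε1 : ∀ n, ε n ≤ 1 := by
    intro n
    rw [hεdef]
    simp only
    rw [div_le_one (by positivity)]
    nlinarith [Nat.cast_nonneg (α := ℝ) n]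
  have hnear : ∀ n, ∃ f : Γ → ℝ, (Function.support f).Finite ∧
      ((((F n).card:ℝ) - ε n)^2 * ∑' x, (f x)^2 < ∑' x : Γ, (∑ s ∈ F n, f (s⁻¹ * x))^2) := by
    intro n
    by_contra hno
    push_neg at hno
    have hc0 : 0 ≤ ((F n).card : ℝ) - ε n := by
      have h1 : (1:ℝ) ≤ ((F n).card:ℝ) := by exact_mod_cast hFcard1 n
      linarith [hε1 n]
    have hmem : ((F n).card : ℝ) - ε n ∈ {c : ℝ | 0 ≤ c ∧ ∀ f : Γ → ℝ,
        (Function.support f).Finite →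
        ∑' x : Γ, (∑ s ∈ F n, f (s⁻¹ * x)) ^ 2 ≤ c ^ 2 * ∑' x : Γ, (f x) ^ 2} :=
      ⟨hc0, fun f hf => hno f hf⟩
    have hbdd : BddBelow {c : ℝ | 0 ≤ c ∧ ∀ f : Γ → ℝ, (Function.support f).Finite →
        ∑' x : Γ, (∑ s ∈ F n, f (s⁻¹ * x)) ^ 2 ≤ c ^ 2 * ∑' x : Γ, (f x) ^ 2} :=
      ⟨0, fun c hc => hc.1⟩
    have hle := csInf_le hbdd hmem
    have h2 := hcon (F n) ⟨1, hF1 n⟩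
    rw [lamNorm] at h2
    linarith [hε0 n, h2.trans hle]
  choose f hfin hgt using hnear
  set S : ℕ → ℝ := fun n => ∑' x, (f n x)^2 with hSdef
  have hsumS : ∀ n, Summable (fun x => (f n x)^2) := fun n =>
    summable_of_ne_finset_zero (s := (hfin n).toFinset) fun x hx => by
      have : f n x = 0 := by
        by_contra hne; exact hx ((hfin n).mem_toFinset.2 hne)
      rw [this]; ring
  have hSpos : ∀ n, 0 < S n := by
    intro n
    have hex : ∃ x, f n x ≠ 0 := by
      by_contra hz
      push_neg at hz
      have h1 : ∑' x, (f n x)^2 = 0 := by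
        have he1 : ∀ x:Γ, (f n x)^2 = 0 := fun x => by rw [hz x]; ring
        calc ∑' x, (f n x)^2 = ∑' _x:Γ, (0:ℝ) := tsum_congr he1
          _ = 0 := tsum_zero
      have h2 : ∑' x : Γ, (∑ s ∈ F n, f n (s⁻¹ * x))^2 = 0 := by
        have he2 : ∀ x : Γ, (∑ s ∈ F n, f n (s⁻¹ * x))^2 = 0 := by
          intro x
          rw [Finset.sum_congr rfl fun s _ => hz (s⁻¹ * x)]
          simp
        calc ∑' x : Γ, (∑ s ∈ F n, f n (s⁻¹ * x))^2 = ∑' _x:Γ, (0:ℝ) := tsum_congr he2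
          _ = 0 := tsum_zero
      have h3 := hgt n
      rw [h1, h2] at h3
      simp at h3
    obtain ⟨x, hx⟩ := hex
    have h1 : 0 < (f n x)^2 := lt_of_le_of_ne (sq_nonneg _) (Ne.symm (pow_ne_zero 2 hx))
    have h2 := Summable.le_tsum (hsumS n) x (fun j _ => sq_nonneg _)
    exact h1.trans_le h2
  set μ : ℕ → Set Γ → ℝ := fun n A => (∑' x, A.indicator (fun y => f n y ^ 2) x) / S n
    with hμdef
  have hμsum : ∀ n (A : Set Γ), Summable (fun x => A.indicator (fun y => f n y ^ 2) x) :=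
    fun n A => summable_of_ne_finset_zero (s := (hfin n).toFinset) fun x hx => by
      have hz : f n x = 0 := by
        by_contra hne; exact hx ((hfin n).mem_toFinset.2 hne)
      by_cases hxA : x ∈ A <;> simp [Set.indicator_apply, hxA, hz]
  have hμ0 : ∀ n (A : Set Γ), 0 ≤ μ n A := fun n A =>
    div_nonneg (tsum_nonneg fun x => Set.indicator_apply_nonneg fun _ => sq_nonneg _)
      (hSpos n).le
  have hμ1 : ∀ n (A : Set Γ), μ n A ≤ 1 := by
    intro n A
    rw [hμdef]
    simp only
    rw [div_le_one (hSpos n)]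
    refine Summable.tsum_le_tsum (fun x => ?_) (hμsum n A) (hsumS n)
    by_cases hxA : x ∈ A <;> simp [Set.indicator_apply, hxA, sq_nonneg]
  have hμuniv : ∀ n, μ n Set.univ = 1 := by
    intro n
    rw [hμdef]
    simp only [Set.indicator_univ]
    exact div_self (hSpos n).ne'
  have hμadd : ∀ n (A B : Set Γ), Disjoint A B → μ n (A ∪ B) = μ n A + μ n B := by
    intro n A B hAB
    rw [hμdef]
    simp only
    rw [← add_div]
    congr 1
    rw [← Summable.tsum_add (hμsum n A) (hμsum n B)]
    refine tsum_congr fun x => ?_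
    rw [Set.indicator_union_of_disjoint hAB]
  obtain ⟨U, hU⟩ := exists_ultrafilter_le (atTop : Filter ℕ)
  have hlim : ∀ A : Set Γ, ∃ l, l ∈ Icc (0:ℝ) 1 ∧ Tendsto (fun n => μ n A) U (𝓝 l) := by
    intro A
    have hc : IsCompact (Icc (0:ℝ) 1) := isCompact_Icc
    have hle : ↑(U.map fun n => μ n A) ≤ 𝓟 (Icc (0:ℝ) 1) := by
      rw [le_principal_iff]
      exact Filter.mem_map.2 (Filter.univ_mem' fun n => ⟨hμ0 n A, hμ1 n A⟩)
    obtain ⟨l, hl, hl2⟩ := hc.ultrafilter_le_nhds _ hle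
    refine ⟨l, hl, ?_⟩
    rwa [Ultrafilter.coe_map] at hl2
  choose m hm0 hm using hlim
  refine ⟨m, ?_, fun A => (hm0 A).1, ?_, ?_⟩
  · have h1 : Tendsto (fun n => μ n Set.univ) U (𝓝 1) := by
      have : (fun n => μ n Set.univ) = fun _ => (1:ℝ) := funext fun n => hμuniv n
      rw [this]; exact tendsto_const_nhds
    exact tendsto_nhds_unique (hm Set.univ) h1
  · intro A B hAB
    have h1 : Tendsto (fun n => μ n (A ∪ B)) U (𝓝 (m A + m B)) :=
      Tendsto.congr (fun n => (hμadd n A B hAB).symm) ((hm A).add (hm B))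
    exact tendsto_nhds_unique (hm (A ∪ B)) h1
  · intro s A
    set d : ℕ → ℝ := fun n => μ n ((fun t => s * t) '' A) - μ n A with hddef
    have hd : Tendsto d U (𝓝 (m ((fun t => s * t) '' A) - m A)) :=
      (hm _).sub (hm A)
    suffices h0 : Tendsto d atTop (𝓝 0) by
      have := tendsto_nhds_unique hd (h0.mono_left hU)
      linarith
    obtain ⟨k, hk⟩ := he s⁻¹
    have hbound : ∀ n, k ≤ n → (d n)^2 ≤ 16 / ((n:ℝ) + 2) := by
      intro n hn
      have hsF : s⁻¹ ∈ F n := by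
        rw [hFdef]
        refine Finset.mem_insert_of_mem (Finset.mem_image.2 ⟨k, ?_, hk⟩)
        exact Finset.mem_range.2 (by omega)
      have hD := key_est (F n) (hF1 n) (ε n) (hε0 n) (f n) (hfin n) (hgt n) s⁻¹ hsF
      simp only [inv_inv] at hD
      have hinv := inv_est s (f n) (hfin n) A
      set t1 := ∑' x, Set.indicator ((fun t => s * t) '' A) (fun y => f n y ^ 2) x with ht1
      set t2 := ∑' x, Set.indicator A (fun y => f n y ^ 2) x with ht2
      set D := ∑' x, (f n (s * x) - f n x) ^ 2 with hDdef
      have hD0 : 0 ≤ D := tsum_nonneg fun x => sq_nonneg _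
      have hS := hSpos n
      have h1 : d n = (t1 - t2) / S n := by
        rw [hddef]; simp only [hμdef]; rw [div_sub_div_same]
      have hdsq : (d n)^2 * (S n)^2 = (t1 - t2)^2 := by
        rw [h1, div_pow, div_mul_cancel₀]
        exact pow_ne_zero 2 hS.ne'
      have h2 : (t1 - t2)^2 ≤ 16 * ((F n).card:ℝ) * ε n * (S n)^2 := by
        have h3 : 4 * D * S n ≤ 4 * (4 * ((F n).card:ℝ) * ε n * S n) * S n := by
          nlinarith [mul_le_mul_of_nonneg_right hD hS.le]
        calc (t1 - t2)^2 ≤ 4 * D * S n := hinv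
          _ ≤ 4 * (4 * ((F n).card:ℝ) * ε n * S n) * S n := h3
          _ = 16 * ((F n).card:ℝ) * ε n * (S n)^2 := by ring
      have hdle : (d n)^2 ≤ 16 * ((F n).card:ℝ) * ε n := by
        have hS2 : 0 < (S n)^2 := pow_pos hS 2
        have := hdsq ▸ h2
        exact le_of_mul_le_mul_right this hS2
      refine hdle.trans ?_
      have hcast := hFcard n
      have h2p : (0:ℝ) < (n:ℝ) + 2 := by positivity
      rw [hεdef]
      simp only
      have heq : 16 * ((F n).card:ℝ) * (1 / ((n:ℝ)+2)^2) = 16 * ((F n).card:ℝ) / ((n:ℝ)+2)^2 := by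
        ring
      rw [heq, div_le_div_iff₀ (by positivity) h2p]
      nlinarith [hcast, h2p]
    have htend : Tendsto (fun n : ℕ => (16:ℝ) / ((n:ℝ) + 2)) atTop (𝓝 0) := by
      apply Tendsto.div_atTop (tendsto_const_nhds)
      exact tendsto_atTop_add_const_right atTop 2 tendsto_natCast_atTop_atTop
    have hsq : Tendsto (fun n => (d n)^2) atTop (𝓝 0) :=
      squeeze_zero' (Filter.Eventually.of_forall fun n => sq_nonneg _)
        (Filter.eventually_atTop.2 ⟨k, hbound⟩) htend
    have habs : Tendsto (fun n => |d n|) atTop (𝓝 0) := by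
      have h4 := (Real.continuous_sqrt.tendsto 0).comp hsq
      simp only [Function.comp_def, Real.sqrt_sq_eq_abs, Real.sqrt_zero] at h4
      exact h4
    exact (tendsto_zero_iff_abs_tendsto_zero d).2 habs
end
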